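/- arXiv:1412.7326 — 6 statements merged into one kernel-verified Lean document; each statement's English description precedes it below -/
import Mathlib

section
/- Let M=(m_1,…,m_n) ∈ ℕ^n with min_{1≤j≤n} m_j = 1, and let ⟨ξ⟩_M = (1+Σ_{j=1}^n ξ_j^{2m_j})^{1/2} be the quasi-homogeneous weight. Then Λ_M(ξ) = (⟨ξ⟩_M^{1/m_1}, …, ⟨ξ⟩_M^{1/m_n}) is a weight vector, i.e. it satisfies conditions (PG), (M) and (SW). -/
open scoped BigOperators RealInnerProductSpace
open MeasureTheory

noncomputable section

abbrev Euc (n : ℕ) := EuclideanSpace ℝ (Fin n)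

/-- The Japanese bracket `⟨ξ⟩ = (1+|ξ|²)^{1/2}`. -/
def jb {n : ℕ} (ξ : Euc n) : ℝ := Real.sqrt (1 + ‖ξ‖ ^ 2)

variable {n : ℕ} {F : Type*} [NormedAddCommGroup F] [NormedSpace ℝ F]

/-- Partial derivative in direction `j`. -/
def pd (j : Fin n) (f : Euc n → F) : Euc n → F :=
  fun ξ => fderiv ℝ f ξ (EuclideanSpace.single j 1)

/-- Iterated partial derivative `∂^α`. -/
def mpd (α : Fin n → ℕ) (f : Euc n → F) : Euc n → F :=
  (List.finRange n).foldr (fun j g => (pd j)^[α j] g) f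

/-- Partial derivative in the `x` variable of a symbol. -/
def xpd (j : Fin n) (a : Euc n → Euc n → F) : Euc n → Euc n → F :=
  fun x ξ => fderiv ℝ (fun y => a y ξ) x (EuclideanSpace.single j 1)

/-- Iterated `x`-derivative `∂_x^β` of a symbol. -/
def xmpd (β : Fin n → ℕ) (a : Euc n → Euc n → F) : Euc n → Euc n → F :=
  (List.finRange n).foldr (fun j g => (xpd j)^[β j] g) a

/-- The mixed derivative `∂_ξ^α ∂_x^β a`. -/
def smpd (α β : Fin n → ℕ) (a : Euc n → Euc n → F) : Euc n → Euc n → F :=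
  fun x ξ => mpd α (xmpd β a x) ξ

/-- `Λ = (λ_1,…,λ_n)` is a weight vector: positive continuous components satisfying
the polynomial growth (PG), (M) and slowly varying (SW) conditions. -/
def IsWeightVector (Λ : Fin n → Euc n → ℝ) : Prop :=
  (∀ j, Continuous (Λ j)) ∧ (∀ j ξ, 0 < Λ j ξ) ∧
  ∃ C c : ℝ, 0 < C ∧ 0 < c ∧
    (∀ j ξ, c * jb ξ ^ c ≤ Λ j ξ ∧ Λ j ξ ≤ C * jb ξ ^ C) ∧
    (∀ j (ξ : Euc n), c * |ξ j| ≤ Λ j ξ) ∧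
    (∀ ξ η : Euc n, ∑ k, |ξ k - η k| * (Λ k η)⁻¹ ≤ c →
      ∀ j, C⁻¹ * Λ j ξ ≤ Λ j η ∧ Λ j η ≤ C * Λ j ξ)

/-- `m` is an admissible weight associated to the weight vector `Λ`:
positive, continuous, temperate and slowly varying (SW1). -/
def IsAdmissible (Λ : Fin n → Euc n → ℝ) (m : Euc n → ℝ) : Prop :=
  Continuous m ∧ (∀ ξ, 0 < m ξ) ∧
  ∃ N C c : ℝ, 0 < N ∧ 0 < C ∧ 0 < c ∧
    (∀ ξ η : Euc n, m η ≤ C * m ξ * (1 + ‖η - ξ‖) ^ N) ∧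
    (∀ ξ η : Euc n, ∑ k, |ξ k - η k| * (Λ k η)⁻¹ ≤ c →
      C⁻¹ * m ξ ≤ m η ∧ m η ≤ C * m ξ)

/-- The symbol class `S_{m,Λ}(Ω)`. -/
def IsSymbol (Ω : Set (Euc n)) (m : Euc n → ℝ) (Λ : Fin n → Euc n → ℝ)
    (a : Euc n → Euc n → ℂ) : Prop :=
  ContDiffOn ℝ (⊤ : ℕ∞) (fun p : Euc n × Euc n => a p.1 p.2) (Ω ×ˢ Set.univ) ∧
  ∀ K : Set (Euc n), IsCompact K → K ⊆ Ω → ∀ α β : Fin n → ℕ,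
    ∃ c > 0, ∀ x ∈ K, ∀ ξ, ‖smpd α β a x ξ‖ ≤ c * m ξ * (∏ k, Λ k ξ ^ α k)⁻¹

/-- The regularizing class `S^{-∞}(Ω)`. -/
def IsSmoothing (Ω : Set (Euc n)) (a : Euc n → Euc n → ℂ) : Prop :=
  ContDiffOn ℝ (⊤ : ℕ∞) (fun p : Euc n × Euc n => a p.1 p.2) (Ω ×ˢ Set.univ) ∧
  ∀ K : Set (Euc n), IsCompact K → K ⊆ Ω → ∀ (μ : ℝ) (α β : Fin n → ℕ),
    ∃ c > 0, ∀ x ∈ K, ∀ ξ, ‖smpd α β a x ξ‖ ≤ c * jb ξ ^ (μ - ∑ k, (α k : ℝ))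

/-- The `Λ`-neighborhood `X_{εΛ}` of a set `X ⊆ ℝ^n`. -/
def lamNbhd (Λ : Fin n → Euc n → ℝ) (ε : ℝ) (X : Set (Euc n)) : Set (Euc n) :=
  ⋃ ξ0 ∈ X, {ξ : Euc n | ∀ j, |ξ j - ξ0 j| < ε * Λ j ξ0}



section AuxStmt1

lemma aux_lin1 {a b nn : ℝ} (h : a ≤ nn * 1 + b) (hb : 0 ≤ b) (hnn : 0 ≤ nn) :
    1 + a ≤ (nn + 1) * (1 + b) := by nlinarith

lemma aux_lin2 {a r K t : ℝ} (h1 : a ≤ r * t) (h2 : r ≤ K) (ht : 0 ≤ t) : a ≤ K * t := by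
  nlinarith

lemma aux_lin3 {S P nn : ℝ} (h : S ≤ nn * P) (h1 : 1 ≤ P) (hnn : 0 ≤ nn) :
    1 + S ≤ (nn + 1) * P := by nlinarith

lemma aux_lin4 {c x l : ℝ} (hkey : x ≤ l) (hx : 0 ≤ x) (hc1 : c ≤ 1) (hc0 : 0 ≤ c) :
    c * x ≤ l := by nlinarith

lemma aux_rpow_le {a b K e : ℝ} (ha : 0 ≤ a) (hb : 1 ≤ b) (hK : 1 ≤ K)
    (hab : a ≤ K * b) (he0 : 0 ≤ e) (he1 : e ≤ 1) : a ^ e ≤ K * b ^ e := by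
  have h1 : a ^ e ≤ (K * b) ^ e := Real.rpow_le_rpow ha hab he0
  have h2 : (K * b) ^ e = K ^ e * b ^ e := Real.mul_rpow (by linarith) (by linarith)
  have h3 : K ^ e ≤ K := by
    calc K ^ e ≤ K ^ (1:ℝ) := Real.rpow_le_rpow_of_exponent_le hK he1
    _ = K := Real.rpow_one K
  have hb' : 0 < b ^ e := Real.rpow_pos_of_pos (by linarith) e
  calc a ^ e ≤ K ^ e * b ^ e := h2 ▸ h1
  _ ≤ K * b ^ e := by nlinarith

lemma aux_rpow_inv_pow {t : ℝ} (ht : 0 ≤ t) {k : ℕ} (hk : 1 ≤ k) :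
    (t ^ ((k:ℝ)⁻¹)) ^ (2 * k) = t ^ 2 := by
  have hk0 : (k:ℝ) ≠ 0 := Nat.cast_ne_zero.mpr (by omega)
  rw [← Real.rpow_natCast (t ^ ((k:ℝ)⁻¹)) (2*k), ← Real.rpow_natCast t 2,
    ← Real.rpow_mul ht]
  congr 1
  push_cast
  field_simp

lemma aux_le_one_add_pow {u : ℝ} (hu : 0 ≤ u) {m : ℕ} (hm : 1 ≤ m) :
    u ≤ 1 + u ^ m := by
  rcases le_total u 1 with h | h
  · have : 0 ≤ u ^ m := pow_nonneg hu m
    linarith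
  · have : u ≤ u ^ m := le_self_pow₀ h (by omega)
    linarith

lemma aux_sqrt_le {A : ℝ} (hA : 1 ≤ A) : Real.sqrt A ≤ A := by
  have : Real.sqrt A ≤ Real.sqrt (A ^ 2) := Real.sqrt_le_sqrt (by nlinarith)
  rwa [Real.sqrt_sq (by linarith)] at this

lemma aux_sqrt_comp {Q1 Q2 A e : ℝ} (h1 : 1 ≤ Q1) (h2 : 1 ≤ Q2) (hA : 1 ≤ A)
    (hQ : Q1 ≤ A * Q2) (he0 : 0 ≤ e) (he1 : e ≤ 1) :
    Real.sqrt Q1 ^ e ≤ A * Real.sqrt Q2 ^ e := by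
  have hs2 : 1 ≤ Real.sqrt Q2 := Real.one_le_sqrt.mpr h2
  have hs : Real.sqrt Q1 ≤ A * Real.sqrt Q2 := by
    calc Real.sqrt Q1 ≤ Real.sqrt (A * Q2) := Real.sqrt_le_sqrt hQ
    _ = Real.sqrt A * Real.sqrt Q2 := Real.sqrt_mul (by linarith) _
    _ ≤ A * Real.sqrt Q2 := by
        have := aux_sqrt_le hA
        nlinarith [Real.sqrt_nonneg A]
  exact aux_rpow_le (Real.sqrt_nonneg _) hs2 hA hs he0 he1

end AuxStmt1

set_option maxHeartbeats 2000000 in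
/-- the quasi-homogeneous vector
`Λ_M(ξ) = (⟨ξ⟩_M^{1/m_1},…,⟨ξ⟩_M^{1/m_n})` is a weight vector. -/
theorem stmt_1 {n : ℕ} (M : Fin n → ℕ) (hM1 : ∀ j, 1 ≤ M j) (hmin : ∃ j, M j = 1) :
    IsWeightVector (fun (j : Fin n) (ξ : Euc n) =>
      (Real.sqrt (1 + ∑ i, ξ i ^ (2 * M i))) ^ ((M j : ℝ)⁻¹)) := by
  classical
  obtain ⟨j0, hj0⟩ := hmin
  -- opaque abbreviations
  obtain ⟨lam, hlamdef⟩ : ∃ lam : Fin n → Euc n → ℝ, lam = fun (j : Fin n) (ξ : Euc n) =>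
      (Real.sqrt (1 + ∑ i, ξ i ^ (2 * M i))) ^ ((M j : ℝ)⁻¹) := ⟨_, rfl⟩
  rw [← hlamdef]
  obtain ⟨mb, hmbdef⟩ : ∃ k : ℕ, Finset.univ.sup M = k := ⟨_, rfl⟩
  have hMle : ∀ j, M j ≤ mb := fun j => hmbdef ▸ Finset.le_sup (Finset.mem_univ j)
  have hmb1 : 1 ≤ mb := hj0 ▸ hMle j0
  clear hmbdef hj0
  have hmbR : (1:ℝ) ≤ (mb:ℝ) := by exact_mod_cast hmb1
  obtain ⟨Q, hQdef⟩ : ∃ Q : Euc n → ℝ, Q = fun ξ => 1 + ∑ i, ξ i ^ (2 * M i) := ⟨_, rfl⟩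
  have hterm : ∀ (ξ : Euc n) i, 0 ≤ ξ i ^ (2 * M i) :=
    fun ξ i => (even_two_mul (M i)).pow_nonneg _
  have hsum0 : ∀ ξ : Euc n, 0 ≤ ∑ i, ξ i ^ (2 * M i) :=
    fun ξ => Finset.sum_nonneg fun i _ => hterm ξ i
  have hQ1 : ∀ ξ, 1 ≤ Q ξ := fun ξ => by
    have := hsum0 ξ; simp only [hQdef]; linarith
  have hQ0 : ∀ ξ, 0 ≤ Q ξ := fun ξ => zero_le_one.trans (hQ1 ξ)
  obtain ⟨s, hsdef⟩ : ∃ s : Euc n → ℝ, s = fun ξ => Real.sqrt (Q ξ) := ⟨_, rfl⟩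
  have hs1 : ∀ ξ, 1 ≤ s ξ := fun ξ => by rw [hsdef]; exact Real.one_le_sqrt.mpr (hQ1 ξ)
  have hs0 : ∀ ξ, 0 ≤ s ξ := fun ξ => by rw [hsdef]; exact Real.sqrt_nonneg _
  have hssq : ∀ ξ, s ξ ^ 2 = Q ξ := fun ξ => by rw [hsdef]; exact Real.sq_sqrt (hQ0 ξ)
  have heM0 : ∀ j, (0:ℝ) < (M j : ℝ) := fun j => by
    have := hM1 j; exact_mod_cast Nat.lt_of_lt_of_le Nat.zero_lt_one this
  have he0 : ∀ j, (0:ℝ) < (M j : ℝ)⁻¹ := fun j => inv_pos.mpr (heM0 j)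
  have he1 : ∀ j, ((M j : ℝ))⁻¹ ≤ 1 := fun j => by
    rw [inv_le_one_iff₀]; right; exact_mod_cast hM1 j
  have hlam : ∀ j ξ, lam j ξ = s ξ ^ ((M j : ℝ)⁻¹) := by
    intro j ξ; rw [hlamdef, hsdef, hQdef]
  have hlam1 : ∀ j ξ, 1 ≤ lam j ξ := fun j ξ => by
    rw [hlam]; exact Real.one_le_rpow (hs1 ξ) (he0 j).le
  have hlam0 : ∀ j ξ, 0 < lam j ξ := fun j ξ => lt_of_lt_of_le one_pos (hlam1 j ξ)
  have hlampow : ∀ j ξ, lam j ξ ^ (2 * M j) = Q ξ := fun j ξ => by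
    rw [hlam, aux_rpow_inv_pow (hs0 ξ) (hM1 j)]; exact hssq ξ
  have hlamles : ∀ j ξ, lam j ξ ≤ s ξ := fun j ξ => by
    have := Real.rpow_le_rpow_of_exponent_le (hs1 ξ) (he1 j)
    rw [Real.rpow_one] at this
    rw [hlam]; exact this
  -- jb facts
  have hjb1 : ∀ ξ : Euc n, 1 ≤ jb ξ := fun ξ => by
    rw [jb]; exact Real.one_le_sqrt.mpr (by nlinarith [sq_nonneg ‖ξ‖])
  have hjb0 : ∀ ξ : Euc n, 0 ≤ jb ξ := fun ξ => zero_le_one.trans (hjb1 ξ)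
  have hjbsq : ∀ ξ : Euc n, jb ξ ^ 2 = 1 + ∑ i, ξ i ^ 2 := fun ξ => by
    rw [jb, Real.sq_sqrt (by positivity), EuclideanSpace.norm_eq,
      Real.sq_sqrt (by positivity)]
    simp [sq_abs]
  have hjbsq1 : ∀ ξ : Euc n, 1 ≤ jb ξ ^ 2 := fun ξ => one_le_pow₀ (hjb1 ξ)
  -- constants
  obtain ⟨D, hDdef⟩ : ∃ D : ℝ, D = ((n:ℝ)+1) * 2^(2*mb+1) * mb := ⟨_, rfl⟩
  have h2p1 : (1:ℝ) ≤ 2^(2*mb+1) := one_le_pow₀ one_le_two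
  have h2p : (1:ℝ) ≤ 2^(2*mb) := one_le_pow₀ one_le_two
  have hn1 : (1:ℝ) ≤ (n:ℝ)+1 := by
    have : (0:ℝ) ≤ n := Nat.cast_nonneg n
    linarith
  have hX1 : (1:ℝ) ≤ ((n:ℝ)+1) * 2^(2*mb+1) := by nlinarith
  have hD1 : (1:ℝ) ≤ D := by
    rw [hDdef]; nlinarith [hX1, hmbR]
  have hD0 : (0:ℝ) < D := lt_of_lt_of_le one_pos hD1
  obtain ⟨c, hcdef⟩ : ∃ c : ℝ, c = D⁻¹ := ⟨_, rfl⟩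
  obtain ⟨C, hCdef⟩ : ∃ C : ℝ, C = ((n:ℝ)+1) * 2^(2*mb+1) + mb := ⟨_, rfl⟩
  have hc0 : 0 < c := hcdef ▸ inv_pos.mpr hD0
  have hc1 : c ≤ 1 := by rw [hcdef]; exact inv_le_one_of_one_le₀ hD1
  have hC1 : 1 ≤ C := by rw [hCdef]; nlinarith [hX1, hmbR]
  have hC0 : 0 < C := lt_of_lt_of_le one_pos hC1
  have hcn : c ≤ ((n:ℝ)+1)⁻¹ := by
    rw [hcdef]
    apply inv_anti₀ (by positivity)
    rw [hDdef]
    nlinarith [mul_le_mul h2p1 hmbR zero_le_one (zero_le_one.trans h2p1), hn1]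
  have hcm : c ≤ ((mb:ℝ))⁻¹ := by
    rw [hcdef]
    apply inv_anti₀ (by linarith : (0:ℝ) < (mb:ℝ))
    rw [hDdef]; nlinarith [hX1, hmbR]
  have hCn : ((n:ℝ)+1) ≤ C := by rw [hCdef]; nlinarith [hmbR, hn1, h2p1]
  have hCmb : ((mb:ℝ)) ≤ C := by rw [hCdef]; nlinarith [hX1]
  have hCA : (2:ℝ)^(2*mb+1) ≤ C := by rw [hCdef]; nlinarith [hmbR, hn1, h2p1]
  refine ⟨?_, ?_, C, c, hC0, hc0, ?_, ?_, ?_⟩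
  · -- continuity
    intro j
    have hQc : Continuous Q := by rw [hQdef]; fun_prop
    have : Continuous fun ξ => s ξ ^ ((M j : ℝ)⁻¹) := by
      simp only [hsdef]
      exact (Real.continuous_sqrt.comp hQc).rpow_const (fun x => Or.inr (he0 j).le)
    have heq : (fun ξ => lam j ξ) = fun ξ => s ξ ^ ((M j : ℝ)⁻¹) := funext fun ξ => hlam j ξ
    show Continuous fun ξ => lam j ξ
    rw [heq]; exact this
  · exact fun j ξ => hlam0 j ξ
  · -- (PG)
    intro j ξ
    constructor
    · -- lower bound
      have hjbQ : jb ξ ^ 2 ≤ ((n:ℝ)+1) * Q ξ := by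
        have hpt : ∀ i : Fin n, ξ i ^ 2 ≤ 1 + ξ i ^ (2 * M i) := fun i => by
          have := aux_le_one_add_pow (sq_nonneg (ξ i)) (hM1 i)
          rwa [← pow_mul] at this
        have hsum : ∑ i, ξ i ^ 2 ≤ ∑ i : Fin n, (1 + ξ i ^ (2 * M i)) :=
          Finset.sum_le_sum fun i _ => hpt i
        rw [Finset.sum_add_distrib, Finset.sum_const, Finset.card_univ,
          Fintype.card_fin, nsmul_eq_mul] at hsum
        have h0 := hsum0 ξ
        rw [hjbsq]
        simp only [hQdef]
        exact aux_lin1 hsum h0 (Nat.cast_nonneg n)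
      have hjbs : jb ξ ≤ ((n:ℝ)+1) * s ξ := by
        have h1 : jb ξ ≤ Real.sqrt (((n:ℝ)+1) * Q ξ) := by
          rw [show jb ξ = Real.sqrt (jb ξ ^ 2) from (Real.sqrt_sq (hjb0 ξ)).symm]
          exact Real.sqrt_le_sqrt hjbQ
        rw [Real.sqrt_mul (by positivity)] at h1
        have hsx : Real.sqrt (Q ξ) = s ξ := by rw [hsdef]
        rw [hsx] at h1
        have h2 : Real.sqrt ((n:ℝ)+1) ≤ (n:ℝ)+1 := aux_sqrt_le hn1
        exact aux_lin2 h1 h2 (hs0 ξ)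
      have h2 : jb ξ ^ ((mb:ℝ)⁻¹) ≤ ((n:ℝ)+1) * s ξ ^ ((mb:ℝ)⁻¹) :=
        aux_rpow_le (hjb0 ξ) (hs1 ξ) hn1 hjbs (by positivity)
          (inv_le_one_of_one_le₀ hmbR)
      have h1 : s ξ ^ ((mb:ℝ)⁻¹) ≤ lam j ξ := by
        rw [hlam]
        apply Real.rpow_le_rpow_of_exponent_le (hs1 ξ)
        apply inv_anti₀ (heM0 j)
        exact_mod_cast hMle j
      have h3 : jb ξ ^ c ≤ jb ξ ^ ((mb:ℝ)⁻¹) :=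
        Real.rpow_le_rpow_of_exponent_le (hjb1 ξ) hcm
      have hpos1 : 0 < jb ξ ^ ((mb:ℝ)⁻¹) := Real.rpow_pos_of_pos (by linarith [hjb1 ξ]) _
      calc c * jb ξ ^ c ≤ ((n:ℝ)+1)⁻¹ * jb ξ ^ ((mb:ℝ)⁻¹) := by
            apply mul_le_mul hcn h3 (Real.rpow_nonneg (hjb0 ξ) _) (by positivity)
      _ ≤ s ξ ^ ((mb:ℝ)⁻¹) := by
            rw [inv_mul_le_iff₀ (by positivity : (0:ℝ) < (n:ℝ)+1)]
            exact h2
      _ ≤ lam j ξ := h1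
    · -- upper bound
      have hQjb : Q ξ ≤ ((n:ℝ)+1) * (jb ξ ^ 2) ^ mb := by
        have hpt : ∀ i : Fin n, ξ i ^ (2 * M i) ≤ (jb ξ ^ 2) ^ mb := fun i => by
          have h1 : ξ i ^ 2 ≤ jb ξ ^ 2 := by
            rw [hjbsq]
            have : ξ i ^ 2 ≤ ∑ k, ξ k ^ 2 :=
              Finset.single_le_sum (fun k _ => sq_nonneg (ξ k)) (Finset.mem_univ i)
            linarith
          calc ξ i ^ (2 * M i) = (ξ i ^ 2) ^ M i := by rw [pow_mul]
          _ ≤ (jb ξ ^ 2) ^ M i := pow_le_pow_left₀ (sq_nonneg _) h1 _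
          _ ≤ (jb ξ ^ 2) ^ mb := pow_le_pow_right₀ (hjbsq1 ξ) (hMle i)
        have hsum : ∑ i, ξ i ^ (2 * M i) ≤ ∑ _i : Fin n, (jb ξ ^ 2) ^ mb :=
          Finset.sum_le_sum fun i _ => hpt i
        rw [Finset.sum_const, Finset.card_univ, Fintype.card_fin, nsmul_eq_mul] at hsum
        have h1 : (1:ℝ) ≤ (jb ξ ^ 2) ^ mb := one_le_pow₀ (hjbsq1 ξ)
        simp only [hQdef]
        exact aux_lin3 hsum h1 (Nat.cast_nonneg n)
      have hsjb : s ξ ≤ ((n:ℝ)+1) * jb ξ ^ mb := by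
        have h1 : s ξ ≤ Real.sqrt (((n:ℝ)+1) * (jb ξ ^ 2) ^ mb) := by
          rw [hsdef]; exact Real.sqrt_le_sqrt hQjb
        have h2 : (jb ξ ^ 2) ^ mb = (jb ξ ^ mb) ^ 2 := by ring
        rw [Real.sqrt_mul (by positivity), h2, Real.sqrt_sq (pow_nonneg (hjb0 ξ) mb)] at h1
        have h3 : Real.sqrt ((n:ℝ)+1) ≤ (n:ℝ)+1 := aux_sqrt_le hn1
        exact aux_lin2 h1 h3 (pow_nonneg (hjb0 ξ) mb)
      have hjbC : jb ξ ^ mb ≤ jb ξ ^ C := by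
        rw [← Real.rpow_natCast (jb ξ) mb]
        exact Real.rpow_le_rpow_of_exponent_le (hjb1 ξ) hCmb
      calc lam j ξ ≤ s ξ := hlamles j ξ
      _ ≤ ((n:ℝ)+1) * jb ξ ^ mb := hsjb
      _ ≤ C * jb ξ ^ C :=
          mul_le_mul hCn hjbC (pow_nonneg (hjb0 ξ) mb) (by positivity)
  · -- (M)
    intro j ξ
    have key : |ξ j| ≤ lam j ξ := by
      rw [← pow_le_pow_iff_left₀ (abs_nonneg _) (hlam0 j ξ).le
        (by have := hM1 j; omega : 2 * M j ≠ 0), hlampow j ξ, pow_abs,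
        abs_of_nonneg (hterm ξ j)]
      have : ξ j ^ (2 * M j) ≤ ∑ i, ξ i ^ (2 * M i) :=
        Finset.single_le_sum (fun i _ => hterm ξ i) (Finset.mem_univ j)
      simp only [hQdef]; linarith [this]
    exact aux_lin4 key (abs_nonneg (ξ j)) hc1 hc0.le
  · -- (SW)
    intro ξ η H j
    have hstep : ∀ k, |ξ k - η k| ≤ c * lam k η := by
      intro k
      have h1 : |ξ k - η k| * (lam k η)⁻¹ ≤ c := by
        have hs := Finset.single_le_sum (f := fun k => |ξ k - η k| * (lam k η)⁻¹)
          (fun i _ => mul_nonneg (abs_nonneg _) (inv_nonneg.mpr (hlam0 i η).le))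
          (Finset.mem_univ k)
        exact le_trans hs H
      rwa [← div_eq_mul_inv, div_le_iff₀ (hlam0 k η)] at h1
    -- pointwise bound in both directions
    have keyk : ∀ a b : Euc n, (∀ k, |a k - b k| ≤ c * lam k η) →
        ∀ k, a k ^ (2 * M k) ≤ 2^(2*mb) * (b k ^ (2 * M k) + c^2 * Q η) := by
      intro a b hab k
      have htri : |a k| ≤ |b k| + c * lam k η := by
        have := abs_sub_abs_le_abs_sub (a k) (b k)
        linarith [hab k]
      have h1 : |a k| ^ (2 * M k) ≤ (|b k| + c * lam k η) ^ (2 * M k) :=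
        pow_le_pow_left₀ (abs_nonneg _) htri _
      have h2 : (|b k| + c * lam k η) ^ (2 * M k) ≤
          2^(2*M k - 1) * (|b k| ^ (2 * M k) + (c * lam k η) ^ (2 * M k)) :=
        add_pow_le (abs_nonneg _) (mul_nonneg hc0.le (hlam0 k η).le) _
      have h3 : (c * lam k η) ^ (2 * M k) ≤ c^2 * Q η := by
        rw [mul_pow, hlampow k η]
        have hc2 : c ^ (2 * M k) ≤ c ^ 2 :=
          pow_le_pow_of_le_one hc0.le hc1 (by have := hM1 k; omega)
        exact mul_le_mul_of_nonneg_right hc2 (hQ0 η)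
      have h4 : (2:ℝ)^(2*M k - 1) ≤ 2^(2*mb) :=
        pow_le_pow_right₀ one_le_two (by have := hMle k; omega)
      have h5 : |a k| ^ (2 * M k) = a k ^ (2 * M k) := by
        rw [pow_abs, abs_of_nonneg (hterm a k)]
      have h6 : |b k| ^ (2 * M k) = b k ^ (2 * M k) := by
        rw [pow_abs, abs_of_nonneg (hterm b k)]
      have h7 : 0 ≤ |b k| ^ (2 * M k) + (c * lam k η) ^ (2 * M k) :=
        add_nonneg (pow_nonneg (abs_nonneg _) _)
          (pow_nonneg (mul_nonneg hc0.le (hlam0 k η).le) _)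
      rw [← h5]
      calc |a k| ^ (2 * M k)
          ≤ 2^(2*M k - 1) * (|b k| ^ (2 * M k) + (c * lam k η) ^ (2 * M k)) :=
            h1.trans h2
      _ ≤ 2^(2*mb) * (|b k| ^ (2 * M k) + (c * lam k η) ^ (2 * M k)) :=
            mul_le_mul_of_nonneg_right h4 h7
      _ ≤ 2^(2*mb) * (b k ^ (2 * M k) + c^2 * Q η) := by
            rw [h6]
            apply mul_le_mul_of_nonneg_left _ (by positivity : (0:ℝ) ≤ 2^(2*mb))
            linarith [h3]
    have hsmall : (n:ℝ) * 2^(2*mb) * c^2 ≤ 1/2 := by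
      have hP0 : (0:ℝ) ≤ 2^(2*mb) := by positivity
      have hn0 : (0:ℝ) ≤ (n:ℝ) := Nat.cast_nonneg n
      have h1 : (n:ℝ) * 2^(2*mb) * c ≤ 1/2 := by
        rw [hcdef, mul_inv_le_iff₀ hD0, hDdef, pow_succ]
        have hnb : (n:ℝ) ≤ ((n:ℝ)+1) * mb := by nlinarith [hn1, hmbR]
        have := mul_le_mul_of_nonneg_right hnb hP0
        nlinarith [this]
      have hcc : c^2 ≤ c := by nlinarith [hc0.le, hc1]
      calc (n:ℝ) * 2^(2*mb) * c^2 ≤ (n:ℝ) * 2^(2*mb) * c :=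
            mul_le_mul_of_nonneg_left hcc (by positivity)
      _ ≤ 1/2 := h1
    -- sum bounds
    have hsumbd : ∀ a b : Euc n, (∀ k, |a k - b k| ≤ c * lam k η) →
        Q a ≤ 2^(2*mb) * Q b + (1/2) * Q η := by
      intro a b hab
      have h1 : ∑ k, a k ^ (2 * M k) ≤
          ∑ k : Fin n, 2^(2*mb) * (b k ^ (2 * M k) + c^2 * Q η) :=
        Finset.sum_le_sum fun k _ => keyk a b hab k
      have h2 : ∑ k : Fin n, 2^(2*mb) * (b k ^ (2 * M k) + c^2 * Q η)
          = 2^(2*mb) * (∑ k, b k ^ (2 * M k)) + (n:ℝ) * (2^(2*mb) * (c^2 * Q η)) := by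
        simp only [mul_add]
        rw [Finset.sum_add_distrib, ← Finset.mul_sum, Finset.sum_const, Finset.card_univ,
          Fintype.card_fin, nsmul_eq_mul]
      have h3 : (n:ℝ) * (2^(2*mb) * (c^2 * Q η)) ≤ (1/2) * Q η := by
        have := mul_le_mul_of_nonneg_right hsmall (hQ0 η)
        nlinarith [this]
      have hb0 := hsum0 b
      have h4 : ∑ k, a k ^ (2 * M k) ≤
          2^(2*mb) * (∑ k, b k ^ (2 * M k)) + (1/2) * Q η := by
        rw [h2] at h1; linarith
      simp only [hQdef]
      simp only [hQdef] at h4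
      nlinarith [h4, hb0, h2p]
    have hQξη : Q ξ ≤ 2^(2*mb+1) * Q η := by
      have := hsumbd ξ η hstep
      have h1 := hQ1 η
      have h2 : (2:ℝ)^(2*mb+1) = 2 * 2^(2*mb) := by ring
      nlinarith [this, h1, h2p]
    have hQηξ : Q η ≤ 2^(2*mb+1) * Q ξ := by
      have := hsumbd η ξ (fun k => by rw [abs_sub_comm]; exact hstep k)
      have h1 := hQ1 ξ
      have h2 : (2:ℝ)^(2*mb+1) = 2 * 2^(2*mb) := by ring
      nlinarith [this, h1, h2p]
    have hl1 : lam j ξ ≤ 2^(2*mb+1) * lam j η := by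
      simp only [hlam, hsdef]
      exact aux_sqrt_comp (hQ1 ξ) (hQ1 η) h2p1 hQξη (he0 j).le (he1 j)
    have hl2 : lam j η ≤ 2^(2*mb+1) * lam j ξ := by
      simp only [hlam, hsdef]
      exact aux_sqrt_comp (hQ1 η) (hQ1 ξ) h2p1 hQηξ (he0 j).le (he1 j)
    constructor
    · rw [inv_mul_le_iff₀ hC0]
      calc lam j ξ ≤ 2^(2*mb+1) * lam j η := hl1
      _ ≤ C * lam j η := mul_le_mul_of_nonneg_right hCA (hlam0 j η).le
    · calc lam j η ≤ 2^(2*mb+1) * lam j ξ := hl2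
      _ ≤ C * lam j ξ := mul_le_mul_of_nonneg_right hCA (hlam0 j ξ).le

end
end

section
/- Let λ : ℝ^n → (0,∞) be continuous and satisfy: (PG) there exist C,c>0 with c⟨ξ⟩^c ≤ λ(ξ) ≤ C⟨ξ⟩^C for all ξ; and the strong slowly varying condition: there exist constants c₀, μ > 0 and C₀ > 1 such that Σ_{j=1}^n |η_j−ξ_j| (λ(η)^{1/μ}+|η_j|)^{-1} ≤ c₀ implies C₀^{-1} λ(ξ) ≤ λ(η) ≤ C₀ λ(ξ). Then the vector-valued function Λ(ξ) = (λ(ξ)^{1/μ}+|ξ_1|, …, λ(ξ)^{1/μ}+|ξ_n|) is a weight vector, i.e. it satisfies conditions (PG), (M) and (SW). -/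
open scoped BigOperators RealInnerProductSpace
open MeasureTheory

noncomputable section

variable {n : ℕ} {F : Type*} [NormedAddCommGroup F] [NormedSpace ℝ F]

/-- if `λ` satisfies (PG) and the strong slowly varying condition, then
`Λ(ξ) = (λ(ξ)^{1/μ}+|ξ_1|,…,λ(ξ)^{1/μ}+|ξ_n|)` is a weight vector. -/
theorem stmt_2 {n : ℕ} (lam : Euc n → ℝ) (hcont : Continuous lam) (hpos : ∀ ξ, 0 < lam ξ)
    (C c : ℝ) (hC : 0 < C) (hc : 0 < c)
    (hPG : ∀ ξ : Euc n, c * jb ξ ^ c ≤ lam ξ ∧ lam ξ ≤ C * jb ξ ^ C)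
    (c₀ μ C₀ : ℝ) (hc₀ : 0 < c₀) (hμ : 0 < μ) (hC₀ : 1 < C₀)
    (hSSV : ∀ ξ η : Euc n,
      ∑ j, |η j - ξ j| * (lam η ^ μ⁻¹ + |η j|)⁻¹ ≤ c₀ →
      C₀⁻¹ * lam ξ ≤ lam η ∧ lam η ≤ C₀ * lam ξ) :
    IsWeightVector (fun (j : Fin n) (ξ : Euc n) => lam ξ ^ μ⁻¹ + |ξ j|) := by
  have hjb1 : ∀ ξ : Euc n, (1:ℝ) ≤ jb ξ := by
    intro ξ
    rw [jb]
    have h := Real.sqrt_le_sqrt (show (1:ℝ) ≤ 1 + ‖ξ‖ ^ 2 by nlinarith [sq_nonneg ‖ξ‖])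
    simp only [Real.sqrt_one] at h; exact h
  have hjbpos : ∀ ξ : Euc n, (0:ℝ) < jb ξ := fun ξ => lt_of_lt_of_le one_pos (hjb1 ξ)
  have hμinv : (0:ℝ) < μ⁻¹ := by positivity
  have hC₀pos : (0:ℝ) < C₀ := lt_trans one_pos hC₀
  have hA1 : (1:ℝ) ≤ C₀ ^ μ⁻¹ := Real.one_le_rpow hC₀.le hμinv.le
  have hApos : (0:ℝ) < C₀ ^ μ⁻¹ := lt_of_lt_of_le one_pos hA1
  set c' := min (min (c ^ μ⁻¹) (c * μ⁻¹)) (min c₀ (1/2)) with hc'def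
  set C' := max (C ^ μ⁻¹ + 1) (max (C * μ⁻¹) (2 * C₀ ^ μ⁻¹)) with hC'def
  have hc'pos : 0 < c' := by
    have h1 : (0:ℝ) < c ^ μ⁻¹ := Real.rpow_pos_of_pos hc _
    have h2 : (0:ℝ) < c * μ⁻¹ := by positivity
    simp only [hc'def, lt_min_iff]
    exact ⟨⟨h1, h2⟩, hc₀, by norm_num⟩
  have hC'pos : 0 < C' := lt_of_lt_of_le (by positivity) (le_max_left _ _)
  have hΛpos : ∀ (j : Fin n) (ξ : Euc n), 0 < lam ξ ^ μ⁻¹ + |ξ j| :=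
    fun j ξ => add_pos_of_pos_of_nonneg (Real.rpow_pos_of_pos (hpos ξ) _) (abs_nonneg _)
  refine ⟨?_, hΛpos, C', c', hC'pos, hc'pos, ?_, ?_, ?_⟩
  · -- continuity
    intro j
    exact (hcont.rpow_const (fun ξ => Or.inl (hpos ξ).ne')).add
      (continuous_abs.comp (EuclideanSpace.proj (𝕜 := ℝ) j).continuous)
  · -- (PG)
    intro j ξ
    constructor
    · have h1 : c ^ μ⁻¹ * jb ξ ^ (c * μ⁻¹) = (c * jb ξ ^ c) ^ μ⁻¹ := by
        rw [Real.mul_rpow hc.le (Real.rpow_nonneg (hjbpos ξ).le _),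
          ← Real.rpow_mul (hjbpos ξ).le]
      have h2 : (c * jb ξ ^ c) ^ μ⁻¹ ≤ lam ξ ^ μ⁻¹ :=
        Real.rpow_le_rpow (mul_nonneg hc.le (Real.rpow_nonneg (hjbpos ξ).le _)) (hPG ξ).1 hμinv.le
      have h3 : c' * jb ξ ^ c' ≤ c ^ μ⁻¹ * jb ξ ^ (c * μ⁻¹) := by
        refine mul_le_mul (le_trans (min_le_left _ _) (min_le_left _ _))
          (Real.rpow_le_rpow_of_exponent_le (hjb1 ξ)
            (le_trans (min_le_left _ _) (min_le_right _ _)))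
          (Real.rpow_nonneg (hjbpos ξ).le _) (Real.rpow_nonneg hc.le _)
      have : c' * jb ξ ^ c' ≤ lam ξ ^ μ⁻¹ := le_trans h3 (h1 ▸ h2)
      exact le_trans this (le_add_of_nonneg_right (abs_nonneg _))
    · have habs : |ξ j| ≤ ‖ξ‖ := by
        rw [show ‖ξ‖ = Real.sqrt (∑ k, ‖ξ k‖ ^ 2) from EuclideanSpace.norm_eq ξ,
          show |ξ j| = Real.sqrt (‖ξ j‖ ^ 2) by rw [Real.sqrt_sq (norm_nonneg _)]; exact (Real.norm_eq_abs _).symm]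
        exact Real.sqrt_le_sqrt (Finset.single_le_sum (f := fun k => ‖ξ k‖ ^ 2)
          (fun k _ => sq_nonneg _) (Finset.mem_univ j))
      have hnorm : ‖ξ‖ ≤ jb ξ := by
        rw [jb]
        exact (Real.le_sqrt (norm_nonneg ξ) (by positivity)).mpr (by linarith [sq_nonneg ‖ξ‖])
      have h1 : lam ξ ^ μ⁻¹ ≤ C ^ μ⁻¹ * jb ξ ^ (C * μ⁻¹) := by
        rw [show C ^ μ⁻¹ * jb ξ ^ (C * μ⁻¹) = (C * jb ξ ^ C) ^ μ⁻¹ by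
          rw [Real.mul_rpow hC.le (Real.rpow_nonneg (hjbpos ξ).le _),
            ← Real.rpow_mul (hjbpos ξ).le]]
        exact Real.rpow_le_rpow (hpos ξ).le (hPG ξ).2 hμinv.le
      have h2 : jb ξ ^ (C * μ⁻¹) ≤ jb ξ ^ C' :=
        Real.rpow_le_rpow_of_exponent_le (hjb1 ξ)
          (le_trans (le_max_left _ _) (le_max_right _ _))
      have h3 : |ξ j| ≤ jb ξ ^ C' := by
        calc |ξ j| ≤ jb ξ := le_trans habs hnorm
        _ = jb ξ ^ (1:ℝ) := (Real.rpow_one _).symm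
        _ ≤ jb ξ ^ C' := Real.rpow_le_rpow_of_exponent_le (hjb1 ξ)
            (le_trans (by nlinarith [Real.rpow_nonneg hC.le μ⁻¹] : (1:ℝ) ≤ C ^ μ⁻¹ + 1)
              (le_max_left _ _))
      have h4 : C ^ μ⁻¹ + 1 ≤ C' := le_max_left _ _
      have h5 : (0:ℝ) ≤ jb ξ ^ C' := Real.rpow_nonneg (hjbpos ξ).le _
      calc lam ξ ^ μ⁻¹ + |ξ j| ≤ C ^ μ⁻¹ * jb ξ ^ C' + jb ξ ^ C' := by
            refine add_le_add (le_trans h1 ?_) h3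
            exact mul_le_mul_of_nonneg_left h2 (Real.rpow_nonneg hC.le _)
        _ = (C ^ μ⁻¹ + 1) * jb ξ ^ C' := by ring
        _ ≤ C' * jb ξ ^ C' := mul_le_mul_of_nonneg_right h4 h5
  · -- (M)
    intro j ξ
    have : c' ≤ 1 := le_trans (le_trans (min_le_right _ _) (min_le_right _ _)) (by norm_num)
    calc c' * |ξ j| ≤ 1 * |ξ j| := mul_le_mul_of_nonneg_right this (abs_nonneg _)
      _ = |ξ j| := one_mul _
      _ ≤ lam ξ ^ μ⁻¹ + |ξ j| := le_add_of_nonneg_left (Real.rpow_pos_of_pos (hpos ξ) _).le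
  · -- (SW)
    intro ξ η hsum0 j
    have hsum : ∑ k, |ξ k - η k| * (lam η ^ μ⁻¹ + |η k|)⁻¹ ≤ c' := hsum0
    have hsum' : ∑ k, |η k - ξ k| * (lam η ^ μ⁻¹ + |η k|)⁻¹ ≤ c₀ := by
      refine le_trans (le_of_eq ?_) (le_trans hsum
        (le_trans (min_le_right _ _) (min_le_left _ _)))
      exact Finset.sum_congr rfl fun k _ => by rw [abs_sub_comm]
    obtain ⟨hl, hr⟩ := hSSV ξ η hsum'
    have hterm : ∀ k : Fin n, |ξ k - η k| ≤ c' * (lam η ^ μ⁻¹ + |η k|) := by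
      intro k
      have h1 : |ξ k - η k| * (lam η ^ μ⁻¹ + |η k|)⁻¹ ≤ c' :=
        le_trans (Finset.single_le_sum
          (f := fun i => |ξ i - η i| * (lam η ^ μ⁻¹ + |η i|)⁻¹)
          (fun i _ => mul_nonneg (abs_nonneg _) (inv_nonneg.mpr (hΛpos i η).le))
          (Finset.mem_univ k)) hsum
      have h2 := mul_le_mul_of_nonneg_right h1 (hΛpos k η).le
      rwa [mul_assoc, inv_mul_cancel₀ (hΛpos k η).ne', mul_one] at h2
    have hc'half : c' ≤ 1/2 := le_trans (min_le_right _ _) (min_le_right _ _)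
    have hlamξ : lam ξ ^ μ⁻¹ ≤ C₀ ^ μ⁻¹ * lam η ^ μ⁻¹ := by
      rw [← Real.mul_rpow hC₀pos.le (hpos η).le]
      exact Real.rpow_le_rpow (hpos ξ).le ((inv_mul_le_iff₀ hC₀pos).mp hl) hμinv.le
    have hlamη : lam η ^ μ⁻¹ ≤ C₀ ^ μ⁻¹ * lam ξ ^ μ⁻¹ := by
      rw [← Real.mul_rpow hC₀pos.le (hpos ξ).le]
      exact Real.rpow_le_rpow (hpos η).le hr hμinv.le
    have h2A : 2 * C₀ ^ μ⁻¹ ≤ C' := le_trans (le_max_right _ _) (le_max_right _ _)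
    have hηpos := hΛpos j η
    have hξpos := hΛpos j ξ
    have hj := hterm j
    have habs1 : |ξ j| ≤ |η j| + |ξ j - η j| := by
      have := abs_sub_abs_le_abs_sub (ξ j) (η j); linarith [abs_sub_abs_le_abs_sub (ξ j) (η j)]
    have habs2 : |η j| ≤ |ξ j| + |ξ j - η j| := by
      have := abs_sub_abs_le_abs_sub (η j) (ξ j)
      rw [abs_sub_comm] at this; linarith
    constructor
    · rw [inv_mul_le_iff₀ hC'pos]
      have key : lam ξ ^ μ⁻¹ + |ξ j| ≤ 2 * C₀ ^ μ⁻¹ * (lam η ^ μ⁻¹ + |η j|) := by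
        have hle : lam ξ ^ μ⁻¹ + |ξ j| ≤
            C₀ ^ μ⁻¹ * lam η ^ μ⁻¹ + |η j| + c' * (lam η ^ μ⁻¹ + |η j|) := by
          linarith
        have hlamηnn : (0:ℝ) ≤ lam η ^ μ⁻¹ := (Real.rpow_pos_of_pos (hpos η) _).le
        nlinarith [abs_nonneg (η j), mul_nonneg hc'pos.le hηpos.le]
      calc lam ξ ^ μ⁻¹ + |ξ j| ≤ 2 * C₀ ^ μ⁻¹ * (lam η ^ μ⁻¹ + |η j|) := key
        _ ≤ C' * (lam η ^ μ⁻¹ + |η j|) := mul_le_mul_of_nonneg_right h2A hηpos.le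
    · have key : lam η ^ μ⁻¹ + |η j| ≤ 2 * C₀ ^ μ⁻¹ * (lam ξ ^ μ⁻¹ + |ξ j|) := by
        have hle : lam η ^ μ⁻¹ + |η j| ≤
            C₀ ^ μ⁻¹ * lam ξ ^ μ⁻¹ + |ξ j| + c' * (lam η ^ μ⁻¹ + |η j|) := by
          linarith
        have h12 : c' * (lam η ^ μ⁻¹ + |η j|) ≤ (1/2) * (lam η ^ μ⁻¹ + |η j|) :=
          mul_le_mul_of_nonneg_right hc'half hηpos.le
        have hlamξnn : (0:ℝ) ≤ lam ξ ^ μ⁻¹ := (Real.rpow_pos_of_pos (hpos ξ) _).le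
        nlinarith [abs_nonneg (ξ j)]
      calc lam η ^ μ⁻¹ + |η j| ≤ 2 * C₀ ^ μ⁻¹ * (lam ξ ^ μ⁻¹ + |ξ j|) := key
        _ ≤ C' * (lam ξ ^ μ⁻¹ + |ξ j|) := mul_le_mul_of_nonneg_right h2A hξpos.le

end
end

section
/- Let λ : ℝ^n → (0,∞) be continuous and satisfy: (PG) there exist C,c>0 with c⟨ξ⟩^c ≤ λ(ξ) ≤ C⟨ξ⟩^C for all ξ; and suppose there exist constants μ, c₀ > 0 and C₀ > 1 such that |η−ξ| < c₀ λ(η)^{1/μ} implies C₀^{-1} λ(ξ) ≤ λ(η) ≤ C₀ λ(ξ). Then λ satisfies the temperance condition with exponent N = μ: there exists a constant C₁ > 0 such that λ(η) ≤ C₁ λ(ξ)(1+|ξ−η|)^{μ} for all ξ, η ∈ ℝ^n. -/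
open scoped BigOperators RealInnerProductSpace
open MeasureTheory

noncomputable section

variable {n : ℕ} {F : Type*} [NormedAddCommGroup F] [NormedSpace ℝ F]

/-- a function slowly varying on `λ^{1/μ}`-balls is temperate with
exponent `N = μ`. -/
theorem stmt_3 {n : ℕ} (lam : Euc n → ℝ) (hcont : Continuous lam) (hpos : ∀ ξ, 0 < lam ξ)
    (C c : ℝ) (hC : 0 < C) (hc : 0 < c)
    (hPG : ∀ ξ : Euc n, c * jb ξ ^ c ≤ lam ξ ∧ lam ξ ≤ C * jb ξ ^ C)
    (μ c₀ C₀ : ℝ) (hμ : 0 < μ) (hc₀ : 0 < c₀) (hC₀ : 1 < C₀)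
    (hSV : ∀ ξ η : Euc n, ‖η - ξ‖ < c₀ * lam η ^ μ⁻¹ →
      C₀⁻¹ * lam ξ ≤ lam η ∧ lam η ≤ C₀ * lam ξ) :
    ∃ C₁ > (0:ℝ), ∀ ξ η : Euc n, lam η ≤ C₁ * lam ξ * (1 + ‖ξ - η‖) ^ μ := by
  have hC₁pos : (0:ℝ) < C₀ + c₀ ^ (-μ) * c⁻¹ := by
    have h1 : (0:ℝ) < c₀ ^ (-μ) := Real.rpow_pos_of_pos hc₀ _
    have h2 : (0:ℝ) < c⁻¹ := inv_pos.mpr hc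
    nlinarith
  refine ⟨C₀ + c₀ ^ (-μ) * c⁻¹, hC₁pos, fun ξ η => ?_⟩
  have hjb : ∀ ζ : Euc n, (1:ℝ) ≤ jb ζ := by
    intro ζ
    have := Real.sqrt_le_sqrt (show (1:ℝ) ≤ 1 + ‖ζ‖ ^ 2 by nlinarith [sq_nonneg ‖ζ‖])
    simpa [jb] using this
  have hlamlb : c ≤ lam ξ := by
    have h1 : (1:ℝ) ≤ jb ξ ^ c := Real.one_le_rpow (hjb ξ) hc.le
    calc c = c * 1 := by ring
      _ ≤ c * jb ξ ^ c := by nlinarith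
      _ ≤ lam ξ := (hPG ξ).1
  have hbase : (1:ℝ) ≤ 1 + ‖ξ - η‖ := by linarith [norm_nonneg (ξ - η)]
  have hfac : (1:ℝ) ≤ (1 + ‖ξ - η‖) ^ μ := Real.one_le_rpow hbase hμ.le
  have hlamξ := hpos ξ
  have hlamη := hpos η
  rcases lt_or_ge ‖η - ξ‖ (c₀ * lam η ^ μ⁻¹) with h | h
  · have h1 : lam η ≤ C₀ * lam ξ := (hSV ξ η h).2
    have hC₀' : (0:ℝ) < C₀ := lt_trans one_pos hC₀
    calc lam η ≤ C₀ * lam ξ := h1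
      _ = C₀ * lam ξ * 1 := by ring
      _ ≤ (C₀ + c₀ ^ (-μ) * c⁻¹) * lam ξ * ((1 + ‖ξ - η‖) ^ μ) := by
          apply mul_le_mul _ hfac one_pos.le (by positivity)
          have : (0:ℝ) ≤ c₀ ^ (-μ) * c⁻¹ := by positivity
          nlinarith
  · have h2 : lam η ^ μ⁻¹ ≤ ‖η - ξ‖ / c₀ := by
      rw [le_div_iff₀ hc₀]
      linarith [h, mul_comm c₀ (lam η ^ μ⁻¹)]
    have h3 : lam η ≤ (‖η - ξ‖ / c₀) ^ μ := by
      have := Real.rpow_le_rpow (by positivity : (0:ℝ) ≤ lam η ^ μ⁻¹) h2 hμ.le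
      rwa [Real.rpow_inv_rpow hlamη.le hμ.ne'] at this
    have h4 : (‖η - ξ‖ / c₀) ^ μ ≤ (1 + ‖ξ - η‖) ^ μ * c₀ ^ (-μ) := by
      rw [Real.div_rpow (norm_nonneg _) hc₀.le, Real.rpow_neg hc₀.le, div_eq_mul_inv]
      apply mul_le_mul_of_nonneg_right _ (by positivity)
      apply Real.rpow_le_rpow (norm_nonneg _) _ hμ.le
      rw [norm_sub_rev]; linarith
    have h5 : (1:ℝ) ≤ c⁻¹ * lam ξ := by
      have := (one_le_div hc).mpr hlamlb
      rwa [div_eq_inv_mul] at this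
    have hfacpos : (0:ℝ) < (1 + ‖ξ - η‖) ^ μ := by positivity
    calc lam η ≤ (1 + ‖ξ - η‖) ^ μ * c₀ ^ (-μ) := h3.trans h4
      _ = c₀ ^ (-μ) * 1 * (1 + ‖ξ - η‖) ^ μ := by ring
      _ ≤ c₀ ^ (-μ) * (c⁻¹ * lam ξ) * (1 + ‖ξ - η‖) ^ μ := by
          apply mul_le_mul_of_nonneg_right _ hfacpos.le
          apply mul_le_mul_of_nonneg_left h5 (by positivity)
      _ = (c₀ ^ (-μ) * c⁻¹) * lam ξ * (1 + ‖ξ - η‖) ^ μ := by ring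
      _ ≤ (C₀ + c₀ ^ (-μ) * c⁻¹) * lam ξ * (1 + ‖ξ - η‖) ^ μ := by
          apply mul_le_mul_of_nonneg_right _ hfacpos.le
          nlinarith

end
end

section
/- Let Λ(ξ) = (λ_1(ξ),…,λ_n(ξ)) be a weight vector and set π(ξ) = min_{1≤j≤n} λ_j(ξ). Then π is an admissible weight associated to Λ (i.e. π satisfies the temperance and (SW1) conditions), and moreover π satisfies the strong slowly varying condition with μ = 1: there exist constants c₀ > 0 and C₀ > 1 such that Σ_{j=1}^n |ξ_j−η_j| (π(η)+|η_j|)^{-1} ≤ c₀ implies C₀^{-1} π(ξ) ≤ π(η) ≤ C₀ π(ξ). -/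
open scoped BigOperators RealInnerProductSpace
open MeasureTheory

noncomputable section

variable {n : ℕ} {F : Type*} [NormedAddCommGroup F] [NormedSpace ℝ F]

lemma aux_abs_sub_sign (a b : ℝ) (h : 0 ≤ a * b) (h2 : |a| ≤ |b|) : |b - a| = |b| - |a| := by
  obtain ha | rfl | ha := lt_trichotomy a 0
  · have hb : b ≤ 0 := by nlinarith
    rw [abs_of_neg ha, abs_of_nonpos hb] at h2 ⊢
    rw [abs_of_nonpos (by linarith)]; ring
  · simp
  · have hb : 0 ≤ b := by nlinarith
    rw [abs_of_pos ha, abs_of_nonneg hb] at h2 ⊢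
    rw [abs_of_nonneg (by linarith)]

lemma aux_abs_sub_opp (a b : ℝ) (h : a * b < 0) : |b - a| = |b| + |a| := by
  obtain ha | rfl | ha := lt_trichotomy a 0
  · have hb : 0 < b := by nlinarith
    rw [abs_of_neg ha, abs_of_pos hb, abs_of_pos (by linarith)]; ring
  · simp at h
  · have hb : b < 0 := by nlinarith
    rw [abs_of_pos ha, abs_of_neg hb, abs_of_neg (by linarith)]; ring

lemma aux_coord_le_norm {n : ℕ} (x : Euc n) (j : Fin n) : |x j| ≤ ‖x‖ := by
  have h : ‖x‖ = Real.sqrt (∑ i, ‖x i‖ ^ 2) := EuclideanSpace.norm_eq x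
  have h2 : |x j| ^ 2 ≤ ∑ i, ‖x i‖ ^ 2 := by
    rw [show |x j| = ‖x j‖ from (Real.norm_eq_abs _).symm]
    exact Finset.single_le_sum (f := fun i => ‖x i‖ ^ 2) (fun i _ => by positivity)
      (Finset.mem_univ j)
  calc |x j| = Real.sqrt (|x j| ^ 2) := by rw [Real.sqrt_sq (abs_nonneg _)]
    _ ≤ _ := by rw [h]; exact Real.sqrt_le_sqrt h2

lemma aux_sub_apply {n : ℕ} (x y : Euc n) (j : Fin n) : (x - y) j = x j - y j := rfl


def eupd {n : ℕ} (p : Euc n) (j : Fin n) (t : ℝ) : Euc n :=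
  WithLp.toLp 2 (Function.update (p : Fin n → ℝ) j t)

lemma eupd_same {n : ℕ} (j : Fin n) (t : ℝ) (p : Euc n) : (eupd p j t) j = t := by
  simp [eupd]

lemma eupd_noteq {n : ℕ} {p : Euc n} {j k : Fin n} {t : ℝ} (h : k ≠ j) :
    (eupd p j t) k = p k := by
  simp [eupd, Function.update_of_ne h]

lemma eupd_idem {n : ℕ} {j : Fin n} (t b : ℝ) (p : Euc n) :
    eupd (eupd p j t) j b = eupd p j b := by
  simp [eupd]

lemma eupd_eq_self {n : ℕ} (j : Fin n) (p : Euc n) : eupd p j (p j) = p := by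
  simp [eupd]


set_option maxHeartbeats 1000000 in
/-- `π(ξ) = min_j λ_j(ξ)` is an admissible weight associated to `Λ`
and satisfies the strong slowly varying condition with `μ = 1`. -/
theorem stmt_4 {n : ℕ} (hn : 0 < n) (Λ : Fin n → Euc n → ℝ) (hΛ : IsWeightVector Λ) :
    IsAdmissible Λ (fun ξ => ⨅ j, Λ j ξ) ∧
    ∃ c₀ > (0:ℝ), ∃ C₀ > (1:ℝ), ∀ ξ η : Euc n,
      ∑ j, |ξ j - η j| * ((⨅ k, Λ k η) + |η j|)⁻¹ ≤ c₀ →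
      C₀⁻¹ * (⨅ j, Λ j ξ) ≤ (⨅ j, Λ j η) ∧ (⨅ j, Λ j η) ≤ C₀ * (⨅ j, Λ j ξ) := by
  have hne : Nonempty (Fin n) := Fin.pos_iff_nonempty.mp hn
  obtain ⟨hcont, hpos, C0, c0, hC0, hc0, hPG, hM0, hSW0⟩ := hΛ
  set piF : Euc n → ℝ := fun ξ => ⨅ j, Λ j ξ with hpiF
  set C : ℝ := max C0 2 with hCdef
  set c : ℝ := min c0 1 with hcdef
  have hC2 : (2:ℝ) ≤ C := le_max_right _ _
  have hC1 : (1:ℝ) ≤ C := by linarith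
  have hCpos : (0:ℝ) < C := by linarith
  have hc1 : c ≤ 1 := min_le_right _ _
  have hcpos : 0 < c := lt_min hc0 one_pos
  have hcc0 : c ≤ c0 := min_le_left _ _
  have hCC0 : C0 ≤ C := le_max_left _ _
  have hjb : ∀ ξ : Euc n, 1 ≤ jb ξ := by
    intro ξ
    show (1:ℝ) ≤ Real.sqrt (1 + ‖ξ‖ ^ 2)
    have h1 : (1:ℝ) ≤ 1 + ‖ξ‖ ^ 2 := by nlinarith [sq_nonneg ‖ξ‖]
    have h2 := Real.sqrt_le_sqrt h1
    rwa [Real.sqrt_one] at h2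
  have hlam_lb : ∀ j (ξ : Euc n), c ≤ Λ j ξ := by
    intro j ξ
    have h1 : c0 * jb ξ ^ c0 ≤ Λ j ξ := (hPG j ξ).1
    have h2 : (1:ℝ) ≤ jb ξ ^ c0 := by
      have h3 := Real.rpow_le_rpow_of_exponent_le (hjb ξ) hc0.le (y := 0)
      simpa using h3
    nlinarith
  have hM : ∀ j (ξ : Euc n), c * |ξ j| ≤ Λ j ξ := fun j ξ =>
    le_trans (mul_le_mul_of_nonneg_right hcc0 (abs_nonneg _)) (hM0 j ξ)
  have hlam_lb2 : ∀ j (ξ : Euc n), c * (1 + |ξ j|) ≤ 2 * Λ j ξ := by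
    intro j ξ
    have h1 := hlam_lb j ξ; have h2 := hM j ξ; nlinarith
  have hSW : ∀ ξ η : Euc n, ∑ k, |ξ k - η k| * (Λ k η)⁻¹ ≤ c →
      ∀ j, C⁻¹ * Λ j ξ ≤ Λ j η ∧ Λ j η ≤ C * Λ j ξ := by
    intro ξ η h j
    have h2 := hSW0 ξ η (le_trans h hcc0) j
    constructor
    · refine le_trans ?_ h2.1
      exact mul_le_mul_of_nonneg_right (inv_anti₀ (by linarith) hCC0) (hpos j ξ).le
    · exact le_trans h2.2 (mul_le_mul_of_nonneg_right hCC0 (hpos j ξ).le)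
  have hbdd : ∀ ξ : Euc n, BddBelow (Set.range fun j => Λ j ξ) :=
    fun ξ => (Set.finite_range _).bddBelow
  have hπ_le : ∀ (ξ : Euc n) (j : Fin n), piF ξ ≤ Λ j ξ := fun ξ j => ciInf_le (hbdd ξ) j
  have hπ_ge : ∀ (ξ : Euc n) (x : ℝ), (∀ j, x ≤ Λ j ξ) → x ≤ piF ξ :=
    fun ξ x h => le_ciInf h
  have hπ_ex : ∀ ξ : Euc n, ∃ j, Λ j ξ = piF ξ := fun ξ => exists_eq_ciInf_of_finite
  have hπ_pos : ∀ ξ : Euc n, 0 < piF ξ := by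
    intro ξ; obtain ⟨j, hj⟩ := hπ_ex ξ; rw [← hj]; exact hpos j ξ
  have hSWπ : ∀ ξ η : Euc n, ∑ k, |ξ k - η k| * (Λ k η)⁻¹ ≤ c →
      C⁻¹ * piF ξ ≤ piF η ∧ piF η ≤ C * piF ξ := by
    intro ξ η h
    constructor
    · refine hπ_ge η _ fun j => le_trans ?_ (hSW ξ η h j).1
      exact mul_le_mul_of_nonneg_left (hπ_le ξ j) (by positivity)
    · obtain ⟨j, hj⟩ := hπ_ex ξ
      calc piF η ≤ Λ j η := hπ_le η j
        _ ≤ C * Λ j ξ := (hSW ξ η h j).2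
        _ = C * piF ξ := by rw [hj]
  -- single coordinate step
  have hstep1 : ∀ (p : Euc n) (j : Fin n) (t : ℝ), |t - p j| ≤ c^2/2 * (1 + |p j|) →
      piF p ≤ C * piF (eupd p j t) ∧ piF (eupd p j t) ≤ C * piF p := by
    intro p j t ht
    have hsum : ∑ k, |(eupd p j t : Euc n) k - p k| * (Λ k p)⁻¹ ≤ c := by
      rw [Finset.sum_eq_single j]
      · rw [eupd_same, ← div_eq_mul_inv, div_le_iff₀ (hpos j p)]
        have h2 := hlam_lb2 j p
        nlinarith [abs_nonneg (t - p j), abs_nonneg (p j),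
          mul_le_mul_of_nonneg_left h2 hcpos.le]
      · intro k _ hk
        rw [eupd_noteq hk]
        simp
      · intro h; exact absurd (Finset.mem_univ j) h
    have h := hSWπ (eupd p j t) p hsum
    refine ⟨h.2, ?_⟩
    have h1 : C * (C⁻¹ * piF (eupd p j t)) ≤ C * piF p :=
      mul_le_mul_of_nonneg_left h.1 hCpos.le
    rwa [← mul_assoc, mul_inv_cancel₀ hCpos.ne', one_mul] at h1
  have widen : ∀ (k l : ℕ) (a b : ℝ), k ≤ l → 0 ≤ b → a ≤ C^k * b → a ≤ C^l * b := by
    intro k l a b hkl hb h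
    exact le_trans h (mul_le_mul_of_nonneg_right (pow_le_pow_right₀ hC1 hkl) hb)
  -- chain along one coordinate, moving away from zero
  have chainC : ∀ m : ℕ, ∀ (p : Euc n) (j : Fin n) (b : ℝ), 0 ≤ p j * b → |p j| ≤ |b| →
      1 + |b| ≤ (1 + c^2/2)^m * (1 + |p j|) →
      piF p ≤ C^m * piF (eupd p j b) ∧
      piF (eupd p j b) ≤ C^m * piF p := by
    intro m
    induction m with
    | zero =>
      intro p j b hsign hle hbound
      have hble : |b| ≤ |p j| := by rw [pow_zero, one_mul] at hbound; linarith
      have habs : |p j| = |b| := le_antisymm hle hble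
      have hb : b = p j := by
        rcases abs_eq_abs.mp habs.symm with h | h
        · exact h
        · rw [h] at hsign
          have hz : p j = 0 := by nlinarith [sq_nonneg (p j)]
          rw [h, hz, neg_zero]
      rw [hb, eupd_eq_self, pow_zero, one_mul]
      exact ⟨le_refl _, le_refl _⟩
    | succ m ih =>
      intro p j b hsign hle hbound
      have hε : (0:ℝ) < c^2/2 := by positivity
      by_cases hcase : 1 + |b| ≤ (1 + c^2/2) * (1 + |p j|)
      · have habs : |b - p j| = |b| - |p j| := aux_abs_sub_sign _ _ hsign hle
        have h1 := hstep1 p j b (by rw [habs]; nlinarith [abs_nonneg (p j)])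
        constructor
        · exact widen 1 (m+1) _ _ (by omega) (hπ_pos _).le (by rw [pow_one]; exact h1.1)
        · exact widen 1 (m+1) _ _ (by omega) (hπ_pos _).le (by rw [pow_one]; exact h1.2)
      · push_neg at hcase
        set s : ℝ := if 0 ≤ b then 1 else -1 with hs
        set t : ℝ := s * ((1 + c^2/2) * (1 + |p j|) - 1) with htdef
        have hinner : (0:ℝ) < (1 + c^2/2) * (1 + |p j|) - 1 := by nlinarith [abs_nonneg (p j)]
        have hsb : s * |b| = b := by
          rw [hs]; split_ifs with h
          · rw [one_mul, abs_of_nonneg h]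
          · rw [abs_of_neg (not_le.mp h)]; ring
        have hs2 : s * s = 1 := by rw [hs]; split_ifs <;> norm_num
        have hsb2 : s * b = |b| := by
          have h9 : s * (s * |b|) = |b| := by rw [← mul_assoc, hs2, one_mul]
          rw [hsb] at h9; exact h9
        have hs1 : |s| = 1 := by rw [hs]; split_ifs <;> simp
        have habs_t : |t| = (1 + c^2/2) * (1 + |p j|) - 1 := by
          rw [htdef, abs_mul, hs1, one_mul, abs_of_pos hinner]
        have htb : 0 ≤ t * b := by
          have he : t * b = ((1 + c^2/2) * (1 + |p j|) - 1) * (s * b) := by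
            rw [htdef]; ring
          rw [he, hsb2]
          exact mul_nonneg hinner.le (abs_nonneg b)
        have ht_le_b : |t| ≤ |b| := by rw [habs_t]; linarith
        have hpj_le_t : |p j| ≤ |t| := by rw [habs_t]; nlinarith [abs_nonneg (p j)]
        have h8 : 1 + c^2/2 ≤ (1 + c^2/2) * (1 + |p j|) := by nlinarith [abs_nonneg (p j)]
        have hbpos : (0:ℝ) < |b| := by linarith
        have hpjt : 0 ≤ p j * t := by
          have h1 : (p j * s) * |b| = p j * b := by rw [mul_assoc, hsb]
          have h2 : 0 ≤ p j * s := by nlinarith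
          have he : p j * t = (p j * s) * ((1 + c^2/2) * (1 + |p j|) - 1) := by
            rw [htdef]; ring
          rw [he]
          exact mul_nonneg h2 hinner.le
        have habs2 : |t - p j| = c^2/2 * (1 + |p j|) := by
          rw [aux_abs_sub_sign _ _ hpjt hpj_le_t, habs_t]; ring
        have h1 := hstep1 p j t (le_of_eq habs2)
        have hp'j : (eupd p j t : Euc n) j = t := eupd_same j t p
        have h2 := ih (eupd p j t) j b (by rw [hp'j]; exact htb)
          (by rw [hp'j]; exact ht_le_b)
          (by rw [hp'j, habs_t]
              exact le_trans hbound (le_of_eq (by rw [pow_succ]; ring)))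
        have hupd : eupd (eupd p j t : Euc n) j b
            = eupd p j b := eupd_idem _ _ _
        rw [hupd] at h2
        constructor
        · calc piF p ≤ C * piF (eupd p j t) := h1.1
            _ ≤ C * (C^m * piF (eupd p j b)) :=
              mul_le_mul_of_nonneg_left h2.1 hCpos.le
            _ = C^(m+1) * piF (eupd p j b) := by rw [pow_succ]; ring
        · calc piF (eupd p j b) ≤ C^m * piF (eupd p j t) := h2.2
            _ ≤ C^m * (C * piF p) := mul_le_mul_of_nonneg_left h1.2 (pow_pos hCpos m).le
            _ = C^(m+1) * piF p := by rw [pow_succ]; ring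
  -- chain along one coordinate, general
  have chain1 : ∀ (m : ℕ) (p : Euc n) (j : Fin n) (b : ℝ),
      1 + |b - p j| ≤ (1 + c^2/2)^m →
      piF p ≤ C^(2*m) * piF (eupd p j b) ∧
      piF (eupd p j b) ≤ C^(2*m) * piF p := by
    intro m p j b hb
    rcases le_or_gt 0 (p j * b) with hsign | hsign
    · rcases le_or_gt |p j| |b| with hle | hlt
      · have h1 : |b| - |p j| ≤ |b - p j| := by
          have := abs_sub_abs_le_abs_sub b (p j); linarith
        have hbound : 1 + |b| ≤ (1 + c^2/2)^m * (1 + |p j|) := by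
          nlinarith [abs_nonneg (p j), abs_nonneg (b - p j)]
        have h := chainC m p j b hsign hle hbound
        exact ⟨widen m (2*m) _ _ (by omega) (hπ_pos _).le h.1,
               widen m (2*m) _ _ (by omega) (hπ_pos _).le h.2⟩
      · have hqj : (eupd p j b : Euc n) j = b := eupd_same j b p
        have h1 : |p j| - |b| ≤ |b - p j| := by
          have h0 := abs_sub_abs_le_abs_sub (p j) b
          rw [abs_sub_comm] at h0; linarith
        have h := chainC m (eupd p j b) j (p j)
          (by rw [hqj]; nlinarith)
          (by rw [hqj]; exact hlt.le)
          (by rw [hqj]; nlinarith [abs_nonneg b, abs_nonneg (b - p j)])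
        have hupd : eupd (eupd p j b : Euc n) j (p j) = p := by
          rw [eupd_idem]; exact eupd_eq_self j p
        rw [hupd] at h
        exact ⟨widen m (2*m) _ _ (by omega) (hπ_pos _).le h.2,
               widen m (2*m) _ _ (by omega) (hπ_pos _).le h.1⟩
    · have habs : |b - p j| = |b| + |p j| := aux_abs_sub_opp _ _ hsign
      have hp0j : (eupd p j (0:ℝ) : Euc n) j = 0 := eupd_same j 0 p
      have h1 := chainC m (eupd p j (0:ℝ)) j (p j)
        (by rw [hp0j]; simp)
        (by rw [hp0j]; simp)
        (by rw [hp0j, abs_zero]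
            have hεpow : (1:ℝ) ≤ (1 + c^2/2)^m := by
              calc (1:ℝ) = 1^m := (one_pow m).symm
                _ ≤ (1 + c^2/2)^m := pow_le_pow_left₀ (by norm_num) (by nlinarith [sq_nonneg c]) m
            nlinarith [abs_nonneg b])
      have hupd1 : eupd (eupd p j (0:ℝ) : Euc n) j (p j) = p := by
        rw [eupd_idem]; exact eupd_eq_self j p
      rw [hupd1] at h1
      have h2 := chainC m (eupd p j (0:ℝ)) j b
        (by rw [hp0j]; simp)
        (by rw [hp0j]; simp)
        (by rw [hp0j, abs_zero]
            have hεpow : (1:ℝ) ≤ (1 + c^2/2)^m := by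
              calc (1:ℝ) = 1^m := (one_pow m).symm
                _ ≤ (1 + c^2/2)^m := pow_le_pow_left₀ (by norm_num) (by nlinarith [sq_nonneg c]) m
            nlinarith [abs_nonneg (p j)])
      have hupd2 : eupd (eupd p j (0:ℝ) : Euc n) j b
          = eupd p j b := eupd_idem _ _ _
      rw [hupd2] at h2
      have hCm : (0:ℝ) < C^m := pow_pos hCpos m
      constructor
      · calc piF p ≤ C^m * piF (eupd p j (0:ℝ)) := h1.2
          _ ≤ C^m * (C^m * piF (eupd p j b)) :=
            mul_le_mul_of_nonneg_left h2.1 hCm.le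
          _ = C^(2*m) * piF (eupd p j b) := by rw [two_mul, pow_add]; ring
      · calc piF (eupd p j b) ≤ C^m * piF (eupd p j (0:ℝ)) := h2.2
          _ ≤ C^m * (C^m * piF p) := mul_le_mul_of_nonneg_left h1.1 hCm.le
          _ = C^(2*m) * piF p := by rw [two_mul, pow_add]; ring
  -- chain over all coordinates
  have chainAll : ∀ (m : ℕ) (ξ η : Euc n), (∀ k : Fin n, 1 + |ξ k - η k| ≤ (1 + c^2/2)^m) →
      piF η ≤ C^(2*m*n) * piF ξ ∧ piF ξ ≤ C^(2*m*n) * piF η := by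
    intro m ξ η hcoord
    have key : ∀ i : ℕ, i ≤ n →
        piF η ≤ C^(2*m*i) * piF (WithLp.toLp 2 (fun k : Fin n => if (k:ℕ) < i then ξ k else η k) : Euc n) ∧
        piF (WithLp.toLp 2 (fun k : Fin n => if (k:ℕ) < i then ξ k else η k) : Euc n) ≤ C^(2*m*i) * piF η := by
      intro i
      induction i with
      | zero =>
        intro _
        have h0 : (WithLp.toLp 2 (fun k : Fin n => if (k:ℕ) < 0 then ξ k else η k) : Euc n) = η := by
          ext k; simp
        rw [h0]
        norm_num
      | succ i ih =>
        intro hi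
        obtain ⟨ha, hb⟩ := ih (by omega)
        have hjlt : i < n := by omega
        set j : Fin n := ⟨i, hjlt⟩ with hjdef
        set p : Euc n := (WithLp.toLp 2 (fun k : Fin n => if (k:ℕ) < i then ξ k else η k) : Euc n) with hp
        have hpj : p j = η j := by
          show (if (j:ℕ) < i then ξ j else η j) = η j
          rw [if_neg (by exact lt_irrefl i)]
        have hupd : (eupd p j (ξ j) : Euc n)
            = (WithLp.toLp 2 (fun k : Fin n => if (k:ℕ) < i+1 then ξ k else η k) : Euc n) := by
          ext k
          show eupd p j (ξ j) k = if (k:ℕ) < i+1 then ξ k else η k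
          by_cases hk : k = j
          · subst hk
            rw [eupd_same, if_pos (show (j:ℕ) < i+1 from Nat.lt_succ_self i)]
          · rw [eupd_noteq hk]
            show (if (k:ℕ) < i then ξ k else η k) = _
            have hki : (k:ℕ) ≠ i := by
              intro h9; exact hk (Fin.ext (by rw [hjdef]; exact h9))
            by_cases h2 : (k:ℕ) < i
            · rw [if_pos h2, if_pos (by omega)]
            · rw [if_neg h2, if_neg (by omega)]
        have hstep := chain1 m p j (ξ j) (by rw [hpj]; exact hcoord j)
        rw [hupd] at hstep
        have hCm : (0:ℝ) ≤ C^(2*m*i) := (pow_pos hCpos _).le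
        constructor
        · calc piF η ≤ C^(2*m*i) * piF p := ha
            _ ≤ C^(2*m*i) * (C^(2*m) * piF (WithLp.toLp 2 (fun k : Fin n => if (k:ℕ) < i+1 then ξ k else η k) : Euc n)) :=
              mul_le_mul_of_nonneg_left hstep.1 hCm
            _ = C^(2*m*(i+1)) * piF (WithLp.toLp 2 (fun k : Fin n => if (k:ℕ) < i+1 then ξ k else η k) : Euc n) := by
              rw [show 2*m*(i+1) = 2*m*i + 2*m by ring, pow_add]; ring
        · calc piF (WithLp.toLp 2 (fun k : Fin n => if (k:ℕ) < i+1 then ξ k else η k) : Euc n)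
              ≤ C^(2*m) * piF p := hstep.2
            _ ≤ C^(2*m) * (C^(2*m*i) * piF η) :=
              mul_le_mul_of_nonneg_left hb (pow_pos hCpos _).le
            _ = C^(2*m*(i+1)) * piF η := by
              rw [show 2*m*(i+1) = 2*m*i + 2*m by ring, pow_add]; ring
    have h := key n le_rfl
    have hfin : (WithLp.toLp 2 (fun k : Fin n => if (k:ℕ) < n then ξ k else η k) : Euc n) = ξ := by
      ext k; exact if_pos k.isLt
    rw [hfin] at h
    exact h
  -- temperance
  have hlogC : 0 < Real.log C := Real.log_pos (by linarith)
  have hlogε : 0 < Real.log (1 + c^2/2) := Real.log_pos (by nlinarith)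
  have hn' : (0:ℝ) < (n:ℝ) := by exact_mod_cast hn
  set N : ℝ := 2 * n * Real.log C / Real.log (1 + c^2/2) with hN
  have hNpos : 0 < N := div_pos (by positivity) hlogε
  have temper : ∀ ξ η : Euc n, piF η ≤ C^(2*n) * piF ξ * (1 + ‖η - ξ‖) ^ N := by
    intro ξ η
    set r : ℝ := ‖η - ξ‖ with hr
    have hr0 : (0:ℝ) ≤ r := norm_nonneg _
    set m : ℕ := ⌈Real.log (1 + r) / Real.log (1 + c^2/2)⌉₊ with hm
    have hlog_r : 0 ≤ Real.log (1 + r) := Real.log_nonneg (by linarith)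
    have hm1 : Real.log (1 + r) ≤ m * Real.log (1 + c^2/2) := by
      have h := Nat.le_ceil (Real.log (1 + r) / Real.log (1 + c^2/2))
      rw [div_le_iff₀ hlogε] at h
      exact h
    have hpow : 1 + r ≤ (1 + c^2/2)^m := by
      have h1 : 1 + r = Real.exp (Real.log (1 + r)) := (Real.exp_log (by linarith)).symm
      have h2 : ((1 + c^2/2):ℝ)^m = Real.exp (Real.log (1 + c^2/2) * m) := by
        rw [← Real.rpow_natCast (1 + c^2/2) m, Real.rpow_def_of_pos (by positivity)]
      rw [h1, h2]
      exact Real.exp_le_exp.mpr (by rw [mul_comm]; exact hm1)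
    have hcoord : ∀ k : Fin n, 1 + |ξ k - η k| ≤ (1 + c^2/2)^m := by
      intro k
      have h1 : |ξ k - η k| ≤ r := by
        have h2 := aux_coord_le_norm (η - ξ) k
        rw [aux_sub_apply] at h2
        rw [abs_sub_comm]
        exact h2
      linarith
    have hchain := (chainAll m ξ η hcoord).1
    have hmle : (m:ℝ) ≤ Real.log (1 + r) / Real.log (1 + c^2/2) + 1 :=
      (Nat.ceil_lt_add_one (by positivity)).le
    have hbig : (C:ℝ)^(2*m*n) ≤ C^(2*n) * (1 + r)^N := by
      rw [← Real.rpow_natCast C (2*m*n), ← Real.rpow_natCast C (2*n)]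
      have h3 : ((2*m*n : ℕ):ℝ) ≤ ((2*n:ℕ):ℝ)
          + ((2*n:ℕ):ℝ) * (Real.log (1 + r) / Real.log (1 + c^2/2)) := by
        push_cast
        nlinarith [hmle, hlog_r, hlogε, hn']
      calc (C:ℝ) ^ ((2*m*n:ℕ):ℝ)
          ≤ C ^ (((2*n:ℕ):ℝ) + ((2*n:ℕ):ℝ) * (Real.log (1 + r) / Real.log (1 + c^2/2))) :=
            Real.rpow_le_rpow_of_exponent_le hC1 h3
        _ = C ^ ((2*n:ℕ):ℝ) * (1 + r) ^ N := by
            rw [Real.rpow_add hCpos]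
            congr 1
            rw [Real.rpow_def_of_pos hCpos, Real.rpow_def_of_pos (by linarith : (0:ℝ) < 1 + r)]
            congr 1
            rw [hN]
            push_cast
            field_simp
    calc piF η ≤ C^(2*m*n) * piF ξ := hchain
      _ ≤ (C^(2*n) * (1 + r)^N) * piF ξ := mul_le_mul_of_nonneg_right hbig (hπ_pos ξ).le
      _ = C^(2*n) * piF ξ * (1 + r)^N := by ring
  have hcontπ : Continuous piF := by
    have h : piF = fun ξ => Finset.univ.inf' Finset.univ_nonempty (fun j => Λ j ξ) := by
      funext ξ
      exact (Finset.inf'_univ_eq_ciInf _).symm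
    rw [h]
    exact Continuous.finset_inf'_apply _ (fun i _ => hcont i)
  constructor
  · refine ⟨hcontπ, hπ_pos, N, C^(2*n), c, hNpos, pow_pos hCpos _, hcpos, temper, ?_⟩
    intro ξ η h
    have h2 := hSWπ ξ η h
    have hCle : C ≤ C^(2*n) := le_self_pow₀ hC1 (by omega)
    constructor
    · refine le_trans ?_ h2.1
      exact mul_le_mul_of_nonneg_right (inv_anti₀ hCpos hCle) (hπ_pos ξ).le
    · exact le_trans h2.2 (mul_le_mul_of_nonneg_right hCle (hπ_pos ξ).le)
  · refine ⟨c^2/2, by positivity, C + 1, by linarith, ?_⟩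
    intro ξ η h
    have hyp : ∑ k, |ξ k - η k| * (Λ k η)⁻¹ ≤ c := by
      have hπη := hπ_pos η
      have hterm : ∀ k : Fin n, |ξ k - η k| * (Λ k η)⁻¹
          ≤ (2/c) * (|ξ k - η k| * (piF η + |η k|)⁻¹) := by
        intro k
        have hlam : c/2 * (piF η + |η k|) ≤ Λ k η := by
          have h1 := hπ_le η k; have h2 := hM k η; nlinarith [abs_nonneg (η k)]
        have hpos2 : (0:ℝ) < piF η + |η k| := by positivity
        have hinv : (Λ k η)⁻¹ ≤ (2/c) * (piF η + |η k|)⁻¹ := by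
          have h1 : (Λ k η)⁻¹ ≤ (c/2 * (piF η + |η k|))⁻¹ :=
            inv_anti₀ (by positivity) hlam
          rwa [mul_inv, inv_div] at h1
        calc |ξ k - η k| * (Λ k η)⁻¹
            ≤ |ξ k - η k| * ((2/c) * (piF η + |η k|)⁻¹) :=
              mul_le_mul_of_nonneg_left hinv (abs_nonneg _)
          _ = (2/c) * (|ξ k - η k| * (piF η + |η k|)⁻¹) := by ring
      calc ∑ k, |ξ k - η k| * (Λ k η)⁻¹
          ≤ ∑ k, (2/c) * (|ξ k - η k| * (piF η + |η k|)⁻¹) :=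
            Finset.sum_le_sum (fun k _ => hterm k)
        _ = (2/c) * ∑ k, |ξ k - η k| * (piF η + |η k|)⁻¹ := by rw [Finset.mul_sum]
        _ ≤ (2/c) * (c^2/2) := mul_le_mul_of_nonneg_left h (by positivity)
        _ = c := by field_simp
    have h2 := hSWπ ξ η hyp
    constructor
    · refine le_trans ?_ h2.1
      exact mul_le_mul_of_nonneg_right (inv_anti₀ hCpos (by linarith)) (hπ_pos ξ).le
    · exact le_trans h2.2 (mul_le_mul_of_nonneg_right (by linarith) (hπ_pos ξ).le)


end
end

section
/- Let Λ be a weight vector on ℝ^n. For every ε > 0 there exists ε* with 0 < ε* < ε, depending only on ε and Λ, such that for every subset X ⊆ ℝ^n: (i) (X_{ε*Λ})_{ε*Λ} ⊆ X_{εΛ}, and (ii) (ℝ^n ∖ X_{εΛ})_{ε*Λ} ⊆ ℝ^n ∖ X_{ε*Λ}. -/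
open scoped BigOperators RealInnerProductSpace
open MeasureTheory

noncomputable section

variable {n : ℕ} {F : Type*} [NormedAddCommGroup F] [NormedSpace ℝ F]

/-- basic properties of `Λ`-neighborhoods. -/
theorem stmt_17 {n : ℕ} (Λ : Fin n → Euc n → ℝ) (hΛ : IsWeightVector Λ) :
    ∀ ε > (0:ℝ), ∃ εs : ℝ, 0 < εs ∧ εs < ε ∧ ∀ X : Set (Euc n),
      lamNbhd Λ εs (lamNbhd Λ εs X) ⊆ lamNbhd Λ ε X ∧
      lamNbhd Λ εs ((lamNbhd Λ ε X)ᶜ) ⊆ (lamNbhd Λ εs X)ᶜ := by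
  obtain ⟨hcont, hpos, C, c, hC, hc, hPG, hM, hSW⟩ := hΛ
  intro ε hε
  set εs := min (ε / (C ^ 2 + C + 1)) (c / (n + 1)) with hεsdef
  have hden : (0:ℝ) < C ^ 2 + C + 1 := by positivity
  have hεs0 : 0 < εs := lt_min (by positivity) (by positivity)
  have hεslt : εs < ε := lt_of_le_of_lt (min_le_left _ _)
    (by rw [div_lt_iff₀ hden]; nlinarith)
  have hεsC : εs * (C ^ 2 + C + 1) ≤ ε := by
    rw [← le_div_iff₀ hden]; exact min_le_left _ _
  have hεsn : (n : ℝ) * εs ≤ c := by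
    have h1 : εs ≤ c / (n + 1) := min_le_right _ _
    have hn : (0:ℝ) < (n : ℝ) + 1 := by positivity
    have h2 : (n : ℝ) * εs ≤ (n : ℝ) * (c / (n + 1)) := by
      apply mul_le_mul_of_nonneg_left h1 (Nat.cast_nonneg n)
    have h3 : (n : ℝ) * (c / (n + 1)) ≤ c := by
      rw [mul_div_assoc', div_le_iff₀ hn]; nlinarith
    linarith
  have key : ∀ ξ η : Euc n, (∀ j, |ξ j - η j| ≤ εs * Λ j η) →
      ∀ j, Λ j ξ ≤ C * Λ j η ∧ Λ j η ≤ C * Λ j ξ := by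
    intro ξ η h j
    have hsum : ∑ k, |ξ k - η k| * (Λ k η)⁻¹ ≤ c := by
      have hstep : ∀ k : Fin n, |ξ k - η k| * (Λ k η)⁻¹ ≤ εs := by
        intro k
        have hp := hpos k η
        have h1 : |ξ k - η k| * (Λ k η)⁻¹ ≤ (εs * Λ k η) * (Λ k η)⁻¹ :=
          mul_le_mul_of_nonneg_right (h k) (inv_nonneg.2 hp.le)
        have h2 : (εs * Λ k η) * (Λ k η)⁻¹ = εs := by
          field_simp
        linarith
      have h3 : ∑ k, |ξ k - η k| * (Λ k η)⁻¹ ≤ ∑ _k : Fin n, εs :=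
        Finset.sum_le_sum fun k _ => hstep k
      have h4 : ∑ _k : Fin n, εs = (n : ℝ) * εs := by
        rw [Finset.sum_const, Finset.card_univ, Fintype.card_fin, nsmul_eq_mul]
      linarith
    have h1 := (hSW ξ η hsum j).1
    have h2 := (hSW ξ η hsum j).2
    constructor
    · calc Λ j ξ = C * (C⁻¹ * Λ j ξ) := by field_simp
        _ ≤ C * Λ j η := by gcongr
    · exact h2
  refine ⟨εs, hεs0, hεslt, fun X => ⟨?_, ?_⟩⟩
  · intro ξ hξ
    simp only [lamNbhd, Set.mem_iUnion, Set.mem_setOf_eq, exists_prop] at hξ ⊢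
    obtain ⟨η, ⟨ξ0, hξ0X, hηξ0⟩, hξη⟩ := hξ
    refine ⟨ξ0, hξ0X, fun j => ?_⟩
    have h1 := hξη j
    have h2 := hηξ0 j
    have h3 : Λ j η ≤ C * Λ j ξ0 := (key η ξ0 (fun k => (hηξ0 k).le) j).1
    have habs : |ξ j - ξ0 j| ≤ |ξ j - η j| + |η j - ξ0 j| := abs_sub_le _ _ _
    have hp := hpos j ξ0
    nlinarith [mul_le_mul_of_nonneg_left h3 hεs0.le,
      mul_le_mul_of_nonneg_right hεsC hp.le,
      mul_nonneg (mul_nonneg hεs0.le (sq_nonneg C)) hp.le]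
  · intro ξ hξ hξmem
    simp only [lamNbhd, Set.mem_iUnion, Set.mem_setOf_eq, exists_prop] at hξ hξmem
    obtain ⟨η, hηX, hξη⟩ := hξ
    obtain ⟨ξ0, hξ0X, hξξ0⟩ := hξmem
    apply hηX
    simp only [lamNbhd, Set.mem_iUnion, Set.mem_setOf_eq, exists_prop]
    refine ⟨ξ0, hξ0X, fun j => ?_⟩
    have h1 := hξη j
    have h2 := hξξ0 j
    have h4 : Λ j η ≤ C * Λ j ξ := (key ξ η (fun k => (hξη k).le) j).2
    have h5 : Λ j ξ ≤ C * Λ j ξ0 := (key ξ ξ0 (fun k => (hξξ0 k).le) j).1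
    have hp := hpos j ξ0
    have h6 : Λ j η ≤ C ^ 2 * Λ j ξ0 := by nlinarith
    have habs : |η j - ξ0 j| ≤ |ξ j - η j| + |ξ j - ξ0 j| := by
      have := abs_sub_le (η j) (ξ j) (ξ0 j)
      rwa [abs_sub_comm (η j) (ξ j)] at this
    nlinarith [mul_le_mul_of_nonneg_left h6 hεs0.le,
      mul_le_mul_of_nonneg_right hεsC hp.le,
      mul_nonneg (mul_nonneg hεs0.le hC.le) hp.le]

end
end

section
/- Let Ω ⊆ ℝ^n be open, Λ a weight vector, m an admissible weight associated to Λ, a ∈ S_{m,Λ}(Ω), x₀ ∈ Ω and X ⊆ ℝ^n. Suppose a is m-microlocally elliptic in X at x₀, i.e. there exist c₀, R₀ > 0 such that |a(x₀,ξ)| ≥ c₀ m(ξ) whenever ξ ∈ X and |ξ| > R₀. Then there exist ε > 0 with B_ε(x₀) ⊆ Ω, and constants C, R > 0, such that |a(x,ξ)| ≥ C m(ξ) for all x with |x − x₀| < ε and all ξ ∈ X_{εΛ} with |ξ| > R. -/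
open scoped BigOperators RealInnerProductSpace
open MeasureTheory

noncomputable section

variable {n : ℕ} {F : Type*} [NormedAddCommGroup F] [NormedSpace ℝ F]

lemma foldr_zero {ι A : Type*} (f : ι → A → A) (x : A) :
    ∀ l : List ι, List.foldr (fun k g => (f k)^[(0:ℕ)] g) x l = x
  | [] => rfl
  | (k :: l) => by
      rw [List.foldr_cons, foldr_zero f x l, Function.iterate_zero_apply]

lemma foldr_notmem {ι A : Type*} [DecidableEq ι] (f : ι → A → A) (j : ι) (x : A) :
    ∀ l : List ι, j ∉ l →
      List.foldr (fun k g => (f k)^[(Pi.single j 1 : ι → ℕ) k] g) x l = x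
  | [], _ => rfl
  | (k :: l), h => by
      have hk : k ≠ j := fun he => h (he ▸ List.mem_cons_self)
      rw [List.foldr_cons, foldr_notmem f j x l (fun hl => h (List.mem_cons_of_mem _ hl)),
        Pi.single_eq_of_ne hk, Function.iterate_zero_apply]

lemma foldr_single {ι A : Type*} [DecidableEq ι] (f : ι → A → A) (j : ι) (x : A) :
    ∀ l : List ι, l.Nodup → j ∈ l →
      List.foldr (fun k g => (f k)^[(Pi.single j 1 : ι → ℕ) k] g) x l = f j x
  | [], _, h => absurd h List.not_mem_nil
  | (k :: l), hnd, hmem => by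
      rcases List.mem_cons.1 hmem with rfl | h
      · rw [List.foldr_cons, foldr_notmem f j x l (List.nodup_cons.1 hnd).1,
          Pi.single_eq_same, Function.iterate_one]
      · have hk : k ≠ j := fun he => (List.nodup_cons.1 hnd).1 (he ▸ h)
        rw [List.foldr_cons, Pi.single_eq_of_ne hk, Function.iterate_zero_apply,
          foldr_single f j x l (List.nodup_cons.1 hnd).2 h]

lemma mpd_zero (f : Euc n → F) : mpd (fun _ => 0) f = f :=
  foldr_zero _ f _

lemma mpd_single (j : Fin n) (f : Euc n → F) : mpd (Pi.single j 1) f = pd j f :=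
  foldr_single _ j f _ (List.nodup_finRange n) (List.mem_finRange j)

lemma xmpd_zero (a : Euc n → Euc n → F) : xmpd (fun _ => 0) a = a :=
  foldr_zero _ a _

lemma xmpd_single (j : Fin n) (a : Euc n → Euc n → F) : xmpd (Pi.single j 1) a = xpd j a :=
  foldr_single _ j a _ (List.nodup_finRange n) (List.mem_finRange j)

lemma smpd_x (j : Fin n) (a : Euc n → Euc n → F) :
    smpd (fun _ => 0) (Pi.single j 1) a = xpd j a := by
  funext x ξ
  simp [smpd, xmpd_single, mpd_zero]

lemma smpd_xi (j : Fin n) (a : Euc n → Euc n → F) (x ξ : Euc n) :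
    smpd (Pi.single j 1) (fun _ => 0) a x ξ = pd j (a x) ξ := by
  simp [smpd, xmpd_zero, mpd_single]

lemma coord_le_norm (v : Euc n) (j : Fin n) : |v j| ≤ ‖v‖ := by
  rw [EuclideanSpace.norm_eq]
  have h1 : |v j| = Real.sqrt (|v j| ^ 2) := by
    rw [Real.sqrt_sq (abs_nonneg _)]
  rw [h1]
  apply Real.sqrt_le_sqrt
  have := Finset.single_le_sum (f := fun k => ‖v k‖ ^ 2)
    (fun k _ => by positivity) (Finset.mem_univ j)
  simpa [Real.norm_eq_abs] using this

lemma clm_apply_le (L : Euc n →L[ℝ] ℂ) (v : Euc n) (B : Fin n → ℝ)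
    (hB : ∀ j, ‖L (EuclideanSpace.single j 1)‖ ≤ B j) :
    ‖L v‖ ≤ ∑ j, |v j| * B j := by
  have hv : v = ∑ j, v j • EuclideanSpace.single j (1:ℝ) := by
    ext k
    rw [show (∑ x : Fin n, v x • EuclideanSpace.single x (1:ℝ)) k
        = ∑ x : Fin n, (v x • EuclideanSpace.single x (1:ℝ)) k from
      by rw [WithLp.ofLp_sum, Finset.sum_apply]]
    simp [EuclideanSpace.single_apply]
  calc ‖L v‖ = ‖∑ j, v j • L (EuclideanSpace.single j (1:ℝ))‖ := by
        conv_lhs => rw [hv]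
        rw [map_sum]
        simp_rw [_root_.map_smul]
      _ ≤ ∑ j, ‖v j • L (EuclideanSpace.single j (1:ℝ))‖ := norm_sum_le _ _
      _ ≤ ∑ j, |v j| * B j := by
        apply Finset.sum_le_sum
        intro j _
        rw [norm_smul, Real.norm_eq_abs]
        exact mul_le_mul_of_nonneg_left (hB j) (abs_nonneg _)

lemma seg_bound (f : Euc n → ℂ) (p v : Euc n) (B : Fin n → ℝ)
    (hf : ∀ t ∈ Set.Icc (0:ℝ) 1, DifferentiableAt ℝ f (p + t • v))
    (hB : ∀ t ∈ Set.Icc (0:ℝ) 1, ∀ j,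
      ‖fderiv ℝ f (p + t • v) (EuclideanSpace.single j 1)‖ ≤ B j) :
    ‖f (p + v) - f p‖ ≤ ∑ j, |v j| * B j := by
  have key : ∀ t ∈ Set.Icc (0:ℝ) 1,
      HasDerivAt (fun s : ℝ => f (p + s • v)) (fderiv ℝ f (p + t • v) v) t := by
    intro t ht
    have h1 : HasDerivAt (fun s : ℝ => p + s • v) v t := by
      simpa using ((hasDerivAt_id t).smul_const v).const_add p
    exact (hf t ht).hasFDerivAt.comp_hasDerivAt t h1
  have main := norm_image_sub_le_of_norm_deriv_le_segment_01'
    (f := fun s : ℝ => f (p + s • v))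
    (f' := fun t => fderiv ℝ f (p + t • v) v)
    (C := ∑ j, |v j| * B j)
    (fun t ht => (key t ht).hasDerivWithinAt)
    (fun t ht => clm_apply_le _ v B (hB t (Set.Ico_subset_Icc_self ht)))
  simpa using main


set_option maxHeartbeats 2000000 in
/-- microlocal `m`-ellipticity at `(x₀, X)` propagates to a full
`Λ`-neighborhood `B_ε(x₀) × X_{εΛ}`. -/
theorem stmt_19 {n : ℕ} (Ω : Set (Euc n)) (hΩ : IsOpen Ω)
    (Λ : Fin n → Euc n → ℝ) (hΛ : IsWeightVector Λ)
    (m : Euc n → ℝ) (hm : IsAdmissible Λ m)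
    (a : Euc n → Euc n → ℂ) (ha : IsSymbol Ω m Λ a)
    (x₀ : Euc n) (hx₀ : x₀ ∈ Ω) (X : Set (Euc n))
    (c₀ R₀ : ℝ) (hc₀ : 0 < c₀) (hR₀ : 0 < R₀)
    (hell : ∀ ξ ∈ X, R₀ < ‖ξ‖ → c₀ * m ξ ≤ ‖a x₀ ξ‖) :
    ∃ ε > (0:ℝ), Metric.ball x₀ ε ⊆ Ω ∧ ∃ C > (0:ℝ), ∃ R > (0:ℝ),
      ∀ x : Euc n, dist x x₀ < ε → ∀ ξ ∈ lamNbhd Λ ε X, R < ‖ξ‖ →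
        C * m ξ ≤ ‖a x ξ‖ := by
  obtain ⟨hΛc, hΛpos, CΛ, cΛ, hCΛ, hcΛ, hPG, hM, hSW⟩ := hΛ
  obtain ⟨hmc, hmpos, N, Cm, cm, hN, hCm, hcm, htemp, hSW1⟩ := hm
  obtain ⟨hsm, hest⟩ := ha
  -- differentiability facts
  have hO : IsOpen (Ω ×ˢ (Set.univ : Set (Euc n))) := hΩ.prod isOpen_univ
  have hdiff : ∀ x ∈ Ω, ∀ ξ : Euc n, DifferentiableAt ℝ
      (fun p : Euc n × Euc n => a p.1 p.2) (x, ξ) := fun x hx ξ =>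
    (hsm.contDiffAt (hO.mem_nhds (Set.mk_mem_prod hx (Set.mem_univ _)))).differentiableAt (by simp)
  have hdx : ∀ x ∈ Ω, ∀ ξ : Euc n, DifferentiableAt ℝ (fun y => a y ξ) x := fun x hx ξ =>
    by have h := (hdiff x hx ξ).comp x ((differentiableAt_id (𝕜 := ℝ) (x := x)).prodMk (differentiableAt_const ξ)); exact h
  have hdξ : ∀ ζ : Euc n, DifferentiableAt ℝ (fun η => a x₀ η) ζ := fun ζ =>
    by have h := (hdiff x₀ hx₀ ζ).comp ζ ((differentiableAt_const x₀).prodMk differentiableAt_id); exact h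
  -- a compact neighborhood of x₀
  obtain ⟨r, hr, hball⟩ := Metric.isOpen_iff.1 hΩ x₀ hx₀
  set ε₁ := r / 2 with hε₁def
  have hε₁ : 0 < ε₁ := by positivity
  set K := Metric.closedBall x₀ ε₁ with hKdef
  have hK : IsCompact K := isCompact_closedBall _ _
  have hKΩ : K ⊆ Ω := (Metric.closedBall_subset_ball (by simp [hε₁def]; linarith)).trans hball
  have hx₀K : x₀ ∈ K := Metric.mem_closedBall_self hε₁.le
  -- symbol bounds on first derivatives
  have hBx : ∀ j : Fin n, ∃ c > 0, ∀ x ∈ K, ∀ ξ, ‖xpd j a x ξ‖ ≤ c * m ξ := by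
    intro j
    obtain ⟨c, hc, hb⟩ := hest K hK hKΩ (fun _ => 0) (Pi.single j 1)
    refine ⟨c, hc, fun x hx ξ => ?_⟩
    have h2 := hb x hx ξ
    rw [smpd_x] at h2
    simpa using h2
  have hBξ : ∀ j : Fin n, ∃ c > 0, ∀ x ∈ K, ∀ ξ, ‖pd j (a x) ξ‖ ≤ c * m ξ * (Λ j ξ)⁻¹ := by
    intro j
    obtain ⟨c, hc, hb⟩ := hest K hK hKΩ (Pi.single j 1) (fun _ => 0)
    refine ⟨c, hc, fun x hx ξ => ?_⟩
    have h2 := hb x hx ξ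
    rw [smpd_xi] at h2
    have hprod : ∏ k, Λ k ξ ^ (Pi.single j 1 : Fin n → ℕ) k = Λ j ξ := by
      rw [Finset.prod_eq_single j (fun k _ hk => by rw [Pi.single_eq_of_ne hk, pow_zero])
        (fun h => absurd (Finset.mem_univ j) h)]
      rw [Pi.single_eq_same, pow_one]
    rwa [hprod] at h2
  choose cB hcB hB using hBx
  choose cD hcD hD using hBξ
  set SB := ∑ j, cB j with hSBdef
  set SD := ∑ j, cD j with hSDdef
  have hSB0 : 0 ≤ SB := Finset.sum_nonneg fun j _ => (hcB j).le
  have hSD0 : 0 ≤ SD := Finset.sum_nonneg fun j _ => (hcD j).le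
  set Stot := SB * Cm + SD * CΛ * Cm with hStotdef
  have hStot0 : 0 ≤ Stot :=
    add_nonneg (mul_nonneg hSB0 hCm.le) (mul_nonneg (mul_nonneg hSD0 hCΛ.le) hCm.le)
  -- the choice of ε
  set ε := min ε₁ (min (min cΛ cm / (n + 1)) (c₀ / (2 * (Stot + 1)))) with hεdef
  have hminpos : 0 < min cΛ cm := lt_min hcΛ hcm
  have hε : 0 < ε := by
    refine lt_min hε₁ (lt_min ?_ ?_)
    · positivity
    · have : 0 < Stot + 1 := by linarith
      positivity
  have hεε₁ : ε ≤ ε₁ := min_le_left _ _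
  have hεsw : (n : ℝ) * ε ≤ min cΛ cm := by
    have h1 : ε ≤ min cΛ cm / (n + 1) := le_trans (min_le_right _ _) (min_le_left _ _)
    have hn1 : (0:ℝ) < (n:ℝ) + 1 := by positivity
    have h2 : (n:ℝ) * ε ≤ (n:ℝ) * (min cΛ cm / (n + 1)) :=
      mul_le_mul_of_nonneg_left h1 (Nat.cast_nonneg n)
    have h3 : (n:ℝ) * (min cΛ cm / (n + 1)) ≤ min cΛ cm := by
      rw [← mul_div_assoc, div_le_iff₀ hn1]
      nlinarith [Nat.cast_nonneg (α := ℝ) n]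
    linarith
  have hεfin : ε * Stot ≤ c₀ / 2 := by
    have h1 : ε ≤ c₀ / (2 * (Stot + 1)) := le_trans (min_le_right _ _) (min_le_right _ _)
    have h2 : ε * Stot ≤ (c₀ / (2 * (Stot + 1))) * Stot :=
      mul_le_mul_of_nonneg_right h1 hStot0
    have h3 : (c₀ / (2 * (Stot + 1))) * Stot ≤ c₀ / 2 := by
      rw [div_mul_eq_mul_div, div_le_div_iff₀ (by linarith) (by norm_num)]
      nlinarith
    linarith
  refine ⟨ε, hε, ?_, ?_⟩
  · exact fun y hy => hKΩ (Metric.closedBall_subset_closedBall hεε₁ (Metric.ball_subset_closedBall hy))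
  refine ⟨c₀ / (2 * Cm), by positivity,
    R₀ + Real.sqrt n * ε * (CΛ * Real.sqrt (1 + R₀ ^ 2) ^ CΛ), ?_, ?_⟩
  · have h0 : 0 ≤ Real.sqrt n * ε * (CΛ * Real.sqrt (1 + R₀ ^ 2) ^ CΛ) := by
      refine mul_nonneg (mul_nonneg (Real.sqrt_nonneg _) hε.le) ?_
      positivity
    linarith
  intro x hx ξ hξ hR
  obtain ⟨ξ0, hξ0X, hco⟩ := Set.mem_iUnion₂.1 hξ
  -- Step A : ‖ξ0‖ > R₀
  have hξ0R : R₀ < ‖ξ0‖ := by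
    by_contra hcon
    push_neg at hcon
    set b := ε * (CΛ * Real.sqrt (1 + R₀ ^ 2) ^ CΛ) with hbdef
    have hb0 : 0 ≤ b := by
      refine mul_nonneg hε.le ?_
      positivity
    have hjb : jb ξ0 ≤ Real.sqrt (1 + R₀ ^ 2) := by
      unfold jb
      apply Real.sqrt_le_sqrt
      nlinarith [norm_nonneg ξ0]
    have hjbpow : jb ξ0 ^ CΛ ≤ Real.sqrt (1 + R₀ ^ 2) ^ CΛ :=
      Real.rpow_le_rpow (Real.sqrt_nonneg _) hjb hCΛ.le
    have hcoB : ∀ j, |ξ j - ξ0 j| ≤ b := by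
      intro j
      have h3 : Λ j ξ0 ≤ CΛ * Real.sqrt (1 + R₀ ^ 2) ^ CΛ :=
        (hPG j ξ0).2.trans (mul_le_mul_of_nonneg_left hjbpow hCΛ.le)
      exact (hco j).le.trans (mul_le_mul_of_nonneg_left h3 hε.le)
    have hnorm : ‖ξ - ξ0‖ ≤ Real.sqrt n * b := by
      rw [EuclideanSpace.norm_eq]
      have hsum : ∑ j, ‖(ξ - ξ0) j‖ ^ 2 ≤ (n:ℝ) * b ^ 2 := by
        calc ∑ j, ‖(ξ - ξ0) j‖ ^ 2 ≤ ∑ _j : Fin n, b ^ 2 := by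
              refine Finset.sum_le_sum fun j _ => ?_
              have he : ‖(ξ - ξ0) j‖ = |ξ j - ξ0 j| := by
                simp [PiLp.sub_apply, Real.norm_eq_abs]
              rw [he]
              exact pow_le_pow_left₀ (abs_nonneg _) (hcoB j) 2
          _ = (n:ℝ) * b ^ 2 := by
              rw [Finset.sum_const, Finset.card_univ, Fintype.card_fin, nsmul_eq_mul]
      calc Real.sqrt (∑ j, ‖(ξ - ξ0) j‖ ^ 2) ≤ Real.sqrt ((n:ℝ) * b ^ 2) :=
            Real.sqrt_le_sqrt hsum
        _ = Real.sqrt n * b := by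
            rw [Real.sqrt_mul (Nat.cast_nonneg n), Real.sqrt_sq hb0]
    have hle : ‖ξ‖ ≤ R₀ + Real.sqrt n * b := by
      calc ‖ξ‖ = ‖ξ0 + (ξ - ξ0)‖ := by rw [show ξ0 + (ξ - ξ0) = ξ from by abel]
        _ ≤ ‖ξ0‖ + ‖ξ - ξ0‖ := norm_add_le _ _
        _ ≤ R₀ + Real.sqrt n * b := add_le_add hcon hnorm
    rw [mul_assoc, ← hbdef] at hR
    linarith
  have hell0 : c₀ * m ξ0 ≤ ‖a x₀ ξ0‖ := hell ξ0 hξ0X hξ0R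
  -- SW conditions along the segment from ξ0 to ξ
  have hswcond : ∀ t ∈ Set.Icc (0:ℝ) 1,
      ∑ k, |(ξ0 + t • (ξ - ξ0)) k - ξ0 k| * (Λ k ξ0)⁻¹ ≤ min cΛ cm := by
    intro t ht
    have hterm : ∀ k, |(ξ0 + t • (ξ - ξ0)) k - ξ0 k| * (Λ k ξ0)⁻¹ ≤ ε := by
      intro k
      have h1 : (ξ0 + t • (ξ - ξ0)) k - ξ0 k = t * (ξ k - ξ0 k) := by
        simp only [PiLp.add_apply, PiLp.smul_apply, PiLp.sub_apply, smul_eq_mul]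
        ring
      rw [h1, abs_mul]
      have ht1 : |t| ≤ 1 := abs_le.2 ⟨by linarith [ht.1], ht.2⟩
      have h2 : |t| * |ξ k - ξ0 k| ≤ ε * Λ k ξ0 := by
        calc |t| * |ξ k - ξ0 k| ≤ 1 * |ξ k - ξ0 k| :=
              mul_le_mul_of_nonneg_right ht1 (abs_nonneg _)
          _ = |ξ k - ξ0 k| := one_mul _
          _ ≤ ε * Λ k ξ0 := (hco k).le
      calc |t| * |ξ k - ξ0 k| * (Λ k ξ0)⁻¹ ≤ ε * Λ k ξ0 * (Λ k ξ0)⁻¹ :=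
            mul_le_mul_of_nonneg_right h2 (inv_nonneg.2 (hΛpos k ξ0).le)
        _ = ε := by
            rw [mul_assoc, mul_inv_cancel₀ (hΛpos k ξ0).ne', mul_one]
    calc ∑ k, |(ξ0 + t • (ξ - ξ0)) k - ξ0 k| * (Λ k ξ0)⁻¹ ≤ ∑ _k : Fin n, ε :=
          Finset.sum_le_sum fun k _ => hterm k
      _ = (n:ℝ) * ε := by
          rw [Finset.sum_const, Finset.card_univ, Fintype.card_fin, nsmul_eq_mul]
      _ ≤ min cΛ cm := hεsw
  have hΛcomp : ∀ t ∈ Set.Icc (0:ℝ) 1, ∀ j,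
      Λ j ξ0 ≤ CΛ * Λ j (ξ0 + t • (ξ - ξ0)) := fun t ht j =>
    (hSW (ξ0 + t • (ξ - ξ0)) ξ0 ((hswcond t ht).trans (min_le_left _ _)) j).2
  have hmcomp : ∀ t ∈ Set.Icc (0:ℝ) 1, m (ξ0 + t • (ξ - ξ0)) ≤ Cm * m ξ0 := by
    intro t ht
    have h := (hSW1 (ξ0 + t • (ξ - ξ0)) ξ0 ((hswcond t ht).trans (min_le_right _ _))).1
    have h2 := mul_le_mul_of_nonneg_left h hCm.le
    rwa [← mul_assoc, mul_inv_cancel₀ hCm.ne', one_mul] at h2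
  have hone : ξ0 + (1:ℝ) • (ξ - ξ0) = ξ := by rw [one_smul]; abel
  have hmξ1 : m ξ ≤ Cm * m ξ0 := by
    have := hmcomp 1 ⟨zero_le_one, le_refl 1⟩
    rwa [hone] at this
  -- D2 : variation in ξ
  have hD2 : ‖a x₀ ξ - a x₀ ξ0‖ ≤ ε * (Cm * CΛ * m ξ0) * SD := by
    have hmain := seg_bound (fun η => a x₀ η) ξ0 (ξ - ξ0)
      (fun j => cD j * (Cm * m ξ0) * (CΛ * (Λ j ξ0)⁻¹))
      (fun t ht => hdξ _)
      (by
        intro t ht j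
        have hpos1 : (0:ℝ) < Λ j (ξ0 + t • (ξ - ξ0)) := hΛpos j _
        have hpos0 : (0:ℝ) < Λ j ξ0 := hΛpos j ξ0
        have hinv : (Λ j (ξ0 + t • (ξ - ξ0)))⁻¹ ≤ CΛ * (Λ j ξ0)⁻¹ := by
          have h4 : (1:ℝ) / (Λ j (ξ0 + t • (ξ - ξ0))) ≤ CΛ / (Λ j ξ0) := by
            rw [div_le_div_iff₀ hpos1 hpos0]
            nlinarith [hΛcomp t ht j]
          simpa [one_div, div_eq_mul_inv] using h4
        calc ‖fderiv ℝ (fun η => a x₀ η) (ξ0 + t • (ξ - ξ0)) (EuclideanSpace.single j 1)‖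
            ≤ cD j * m (ξ0 + t • (ξ - ξ0)) * (Λ j (ξ0 + t • (ξ - ξ0)))⁻¹ :=
              hD j x₀ hx₀K _
          _ ≤ cD j * (Cm * m ξ0) * (CΛ * (Λ j ξ0)⁻¹) := by
              refine mul_le_mul ?_ hinv (inv_nonneg.2 hpos1.le) ?_
              · exact mul_le_mul_of_nonneg_left (hmcomp t ht) (hcD j).le
              · exact mul_nonneg (hcD j).le (mul_nonneg hCm.le (hmpos ξ0).le))
    rw [show ξ0 + (ξ - ξ0) = ξ from by abel] at hmain
    refine hmain.trans ?_
    have hterm : ∀ j ∈ Finset.univ, |(ξ - ξ0) j| * (cD j * (Cm * m ξ0) * (CΛ * (Λ j ξ0)⁻¹))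
        ≤ ε * (Cm * CΛ * m ξ0) * cD j := by
      intro j _
      have hpos0 : (0:ℝ) < Λ j ξ0 := hΛpos j ξ0
      have h1 : |(ξ - ξ0) j| ≤ ε * Λ j ξ0 := by
        have he : (ξ - ξ0) j = ξ j - ξ0 j := rfl
        rw [he]; exact (hco j).le
      calc |(ξ - ξ0) j| * (cD j * (Cm * m ξ0) * (CΛ * (Λ j ξ0)⁻¹))
          ≤ (ε * Λ j ξ0) * (cD j * (Cm * m ξ0) * (CΛ * (Λ j ξ0)⁻¹)) := by
            refine mul_le_mul_of_nonneg_right h1 ?_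
            have := (hcD j).le
            have := (hmpos ξ0).le
            positivity
        _ = ε * (Cm * CΛ * m ξ0) * cD j := by
            field_simp
    calc ∑ j, |(ξ - ξ0) j| * (cD j * (Cm * m ξ0) * (CΛ * (Λ j ξ0)⁻¹))
        ≤ ∑ j, ε * (Cm * CΛ * m ξ0) * cD j := Finset.sum_le_sum hterm
      _ = ε * (Cm * CΛ * m ξ0) * SD := by rw [← Finset.mul_sum]
  -- D1 : variation in x
  have hxε : ‖x - x₀‖ < ε := by rwa [← dist_eq_norm]
  have hseg : ∀ t ∈ Set.Icc (0:ℝ) 1, x₀ + t • (x - x₀) ∈ K := by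
    intro t ht
    rw [Metric.mem_closedBall, dist_eq_norm]
    have he : x₀ + t • (x - x₀) - x₀ = t • (x - x₀) := by abel
    rw [he, norm_smul]
    have ht1 : ‖t‖ ≤ 1 := by
      rw [Real.norm_eq_abs]; exact abs_le.2 ⟨by linarith [ht.1], ht.2⟩
    calc ‖t‖ * ‖x - x₀‖ ≤ 1 * ‖x - x₀‖ := mul_le_mul_of_nonneg_right ht1 (norm_nonneg _)
      _ = ‖x - x₀‖ := one_mul _
      _ ≤ ε₁ := by linarith
  have hD1 : ‖a x ξ - a x₀ ξ‖ ≤ ε * (Cm * m ξ0) * SB := by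
    have hmain := seg_bound (fun y => a y ξ) x₀ (x - x₀) (fun j => cB j * m ξ)
      (fun t ht => hdx _ (hKΩ (hseg t ht)) ξ)
      (fun t ht j => hB j _ (hseg t ht) ξ)
    rw [show x₀ + (x - x₀) = x from by abel] at hmain
    refine hmain.trans ?_
    have hterm : ∀ j ∈ Finset.univ, |(x - x₀) j| * (cB j * m ξ)
        ≤ ε * (Cm * m ξ0) * cB j := by
      intro j _
      have h1 : |(x - x₀) j| ≤ ε := (coord_le_norm (x - x₀) j).trans hxε.le
      calc |(x - x₀) j| * (cB j * m ξ) ≤ ε * (cB j * m ξ) := by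
            refine mul_le_mul_of_nonneg_right h1 ?_
            have := (hcB j).le
            have := (hmpos ξ).le
            positivity
        _ ≤ ε * (cB j * (Cm * m ξ0)) := by
            refine mul_le_mul_of_nonneg_left ?_ hε.le
            exact mul_le_mul_of_nonneg_left hmξ1 (hcB j).le
        _ = ε * (Cm * m ξ0) * cB j := by ring
    calc ∑ j, |(x - x₀) j| * (cB j * m ξ) ≤ ∑ j, ε * (Cm * m ξ0) * cB j :=
          Finset.sum_le_sum hterm
      _ = ε * (Cm * m ξ0) * SB := by rw [← Finset.mul_sum]
  -- triangle inequality and conclusion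
  have t1 : ‖a x₀ ξ0‖ ≤ ‖a x₀ ξ‖ + ‖a x₀ ξ - a x₀ ξ0‖ := by
    have h := norm_sub_le (a x₀ ξ) (a x₀ ξ - a x₀ ξ0)
    rwa [sub_sub_cancel] at h
  have t2 : ‖a x₀ ξ‖ ≤ ‖a x ξ‖ + ‖a x ξ - a x₀ ξ‖ := by
    have h := norm_sub_le (a x ξ) (a x ξ - a x₀ ξ)
    rwa [sub_sub_cancel] at h
  have hsumE : ε * (Cm * m ξ0) * SB + ε * (Cm * CΛ * m ξ0) * SD = ε * Stot * m ξ0 := by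
    rw [hStotdef]; ring
  have h5 : ε * Stot * m ξ0 ≤ c₀ / 2 * m ξ0 :=
    mul_le_mul_of_nonneg_right hεfin (hmpos ξ0).le
  have h6 : c₀ / 2 * m ξ0 ≤ ‖a x ξ‖ := by linarith
  have h7 : c₀ / (2 * Cm) * m ξ ≤ c₀ / (2 * Cm) * (Cm * m ξ0) :=
    mul_le_mul_of_nonneg_left hmξ1 (by positivity)
  have h8 : c₀ / (2 * Cm) * (Cm * m ξ0) = c₀ / 2 * m ξ0 := by
    field_simp
  linarith

end
end
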